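/- arXiv:0901.1620 — 5 statements merged into one kernel-verified Lean document; each statement's English description precedes it below -/
import Mathlib

section
/- Let x₁ < x₂ < ⋯ < x_{n₀} be the zeros of an orthogonal polynomial S_{n₀} of degree n₀ with respect to a probability measure σ on ℝ, and fix 1 ≤ k₀ ≤ n₀. Let P be the unique polynomial of degree ≤ 2n₀-2 satisfying P(x_k) = 0 for k < k₀, P(x_k) = 1 for k ≥ k₀, and P'(x_k) = 0 for all k ≠ k₀. Then P(x) ≥ 1 for all x ≥ x_{k₀} and P(x) ≥ 0 for all x < x_{k₀}; in particular P ≥ 𝟙_{[x_{k₀},∞)} on ℝ. -/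
/-!
Write `k₀ = j + 1` (for `k₀ = 0` all gaps are flat, Rolle gives `2n₀ - 2` zeros of `P'`, so
`P' = 0` and `P ≡ 1`). On every gap `(x i, x (i+1))` with `i ≠ j` the values of `P` at the two
ends agree, so Rolle gives a critical point `ξ i` inside. With the nodes `x k`, `k ≠ k₀`, these
are `2n₀ - 3` distinct zeros of `P'`, whose degree is at most `2n₀ - 3`; hence
`P' = c (X - x 0) ∏_{i ≠ j} (X - ξ i)(X - x (i+1))`, and the factor of gap `i` is negative exactly
on `(ξ i, x (i+1))`. The rise of `P` from `0` to `1` across gap `j` forces `c > 0`. So `P`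
decreases left of `x 0`, increases right of the last node, and on each gap first rises and then
falls (gap `j`: only rises), hence stays above the smaller of its two endpoint values.
-/
open Polynomial Set Finset

namespace Polynomial

theorem exists_derivative_eval_eq_zero (p : ℝ[X]) {a b : ℝ} (hab : a < b)
    (h : p.eval a = p.eval b) : ∃ c ∈ Ioo a b, p.derivative.eval c = 0 := by
  simpa only [Polynomial.deriv] using exists_deriv_eq_zero hab p.continuousOn h

theorem exists_derivative_eval_eq_slope (p : ℝ[X]) {a b : ℝ} (hab : a < b) :
    ∃ c ∈ Ioo a b, p.derivative.eval c = (p.eval b - p.eval a) / (b - a) := by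
  simpa only [Polynomial.deriv] using
    exists_deriv_eq_slope (fun t => p.eval t) hab p.continuousOn p.differentiable.differentiableOn

theorem strictMonoOn_eval_of_derivative_pos (p : ℝ[X]) {D : Set ℝ} (hD : Convex ℝ D)
    (h : ∀ t ∈ interior D, 0 < p.derivative.eval t) : StrictMonoOn (fun t => p.eval t) D :=
  strictMonoOn_of_deriv_pos hD p.continuousOn (by simpa only [Polynomial.deriv] using h)

theorem strictAntiOn_eval_of_derivative_neg (p : ℝ[X]) {D : Set ℝ} (hD : Convex ℝ D)
    (h : ∀ t ∈ interior D, p.derivative.eval t < 0) : StrictAntiOn (fun t => p.eval t) D :=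
  strictAntiOn_of_deriv_neg hD p.continuousOn (by simpa only [Polynomial.deriv] using h)

theorem min_eval_le_eval_of_derivative_pos_of_neg (p : ℝ[X]) {a b c y : ℝ} (hac : a ≤ c)
    (hcb : c ≤ b) (hpos : ∀ t ∈ Ioo a c, 0 < p.derivative.eval t)
    (hneg : ∀ t ∈ Ioo c b, p.derivative.eval t < 0) (hy : y ∈ Icc a b) :
    min (p.eval a) (p.eval b) ≤ p.eval y := by
  rcases le_total y c with hyc | hcy
  · have hmono := p.strictMonoOn_eval_of_derivative_pos (convex_Icc a c)
      (by rwa [interior_Icc])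
    exact (min_le_left _ _).trans
      (hmono.monotoneOn ⟨le_rfl, hac⟩ ⟨hy.1, hyc⟩ hy.1)
  · have hanti := p.strictAntiOn_eval_of_derivative_neg (convex_Icc c b)
      (by rwa [interior_Icc])
    exact (min_le_right _ _).trans
      (hanti.antitoneOn ⟨hcy, hy.2⟩ ⟨hcb, le_rfl⟩ hy.2)

theorem eq_C_leadingCoeff_mul_prod_X_sub_C {R : Type*} [CommRing R] [IsDomain R] {p : R[X]}
    (hp : p ≠ 0) {T : Finset R} (hroot : ∀ z ∈ T, p.IsRoot z) (hdeg : p.natDegree ≤ #T) :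
    p = C p.leadingCoeff * ∏ z ∈ T, (X - C z) := by
  refine eq_leadingCoeff_mul_of_monic_of_dvd_of_natDegree_le (monic_prod_X_sub_C (fun z => z) T)
    ?_ (by rwa [natDegree_finsetProd_X_sub_C_eq_card])
  rw [Finset.prod_eq_multiset_prod, Multiset.prod_X_sub_C_dvd_iff_le_roots hp]
  exact (Multiset.le_iff_subset T.nodup).2 fun z hz => (mem_roots hp).2 (hroot z hz)

theorem derivative_eq_zero_of_natDegree_le_card {K : Type*} [Field K] [CharZero K] {p : K[X]}
    {T : Finset K} (hroot : ∀ z ∈ T, (derivative p).IsRoot z) (hdeg : p.natDegree ≤ #T) :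
    derivative p = 0 := by
  by_contra hp
  have hlt := natDegree_derivative_lt (mt derivative_eq_zero.2 hp)
  have hcard := card_le_degree_of_subset_roots fun z hz => (mem_roots hp).2 (hroot z hz)
  omega

end Polynomial

theorem Fin.exists_mem_Ico_castSucc_succ {α : Type*} [LinearOrder α] {n : ℕ}
    (x : Fin (n + 1) → α) {y : α} (h0 : x 0 ≤ y) (hlast : y < x (Fin.last n)) :
    ∃ k : Fin n, y ∈ Ico (x k.castSucc) (x k.succ) := by
  by_contra! h
  have hle : ∀ k, x k ≤ y := fun k =>
    Fin.induction h0 (fun k hk => le_of_not_gt fun hlt => h k ⟨hk, hlt⟩) k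
  exact (hle _).not_gt hlast

theorem StrictMono.disjoint_Ioc_castSucc_succ {α : Type*} [LinearOrder α] {n : ℕ}
    {x : Fin (n + 1) → α} (hx : StrictMono x) {i k : Fin n} (hik : i ≠ k) :
    Disjoint (Ioc (x i.castSucc) (x i.succ)) (Ioc (x k.castSucc) (x k.succ)) := by
  rcases hik.lt_or_gt with h | h
  · exact Ioc_disjoint_Ioc_of_le (hx.monotone (Fin.succ_le_castSucc_iff.2 h))
  · exact (Ioc_disjoint_Ioc_of_le (hx.monotone (Fin.succ_le_castSucc_iff.2 h))).symm

section GapPoints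

variable {n : ℕ} {x : Fin (n + 1) → ℝ} {ξ : Fin n → ℝ} {s : Finset (Fin n)} {i j k : Fin n}
  {y : ℝ}

noncomputable def gapPoints (x : Fin (n + 1) → ℝ) (ξ : Fin n → ℝ) (s : Finset (Fin n)) :
    Finset ℝ :=
  s.biUnion fun i => {ξ i, x i.succ}

theorem mem_Ioc_of_mem_pair (hξ : ξ i ∈ Ioo (x i.castSucc) (x i.succ)) {z : ℝ}
    (hz : z ∈ ({ξ i, x i.succ} : Finset ℝ)) : z ∈ Ioc (x i.castSucc) (x i.succ) := by
  rcases Finset.mem_insert.1 hz with rfl | hz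
  · exact Ioo_subset_Ioc_self hξ
  rw [Finset.mem_singleton.1 hz]
  exact ⟨hξ.1.trans hξ.2, le_rfl⟩

theorem pairwiseDisjoint_pairs (hx : StrictMono x)
    (hξ : ∀ i ∈ s, ξ i ∈ Ioo (x i.castSucc) (x i.succ)) :
    (s : Set (Fin n)).PairwiseDisjoint fun i => ({ξ i, x i.succ} : Finset ℝ) :=
  fun i hi k hk hik => Finset.disjoint_left.2 fun _ hzi hzk =>
    Set.disjoint_left.1 (hx.disjoint_Ioc_castSucc_succ hik)
      (mem_Ioc_of_mem_pair (hξ i hi) hzi) (mem_Ioc_of_mem_pair (hξ k hk) hzk)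

theorem zero_notMem_gapPoints (hx : StrictMono x)
    (hξ : ∀ i ∈ s, ξ i ∈ Ioo (x i.castSucc) (x i.succ)) : x 0 ∉ gapPoints x ξ s := by
  simp only [gapPoints, Finset.mem_biUnion, not_exists, not_and]
  intro i hi hmem
  exact (hx.monotone (Fin.zero_le _)).not_gt (mem_Ioc_of_mem_pair (hξ i hi) hmem).1

theorem card_gapPoints (hx : StrictMono x)
    (hξ : ∀ i ∈ s, ξ i ∈ Ioo (x i.castSucc) (x i.succ)) : #(gapPoints x ξ s) = 2 * #s := by
  rw [gapPoints, card_biUnion (pairwiseDisjoint_pairs hx hξ),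
    sum_congr rfl fun i hi => card_pair (hξ i hi).2.ne, sum_const, smul_eq_mul, mul_comm]

theorem prod_insert_gapPoints (hx : StrictMono x)
    (hξ : ∀ i ∈ s, ξ i ∈ Ioo (x i.castSucc) (x i.succ)) (y : ℝ) :
    ∏ z ∈ insert (x 0) (gapPoints x ξ s), (y - z) =
      (y - x 0) * ∏ i ∈ s, (y - ξ i) * (y - x i.succ) := by
  rw [prod_insert (zero_notMem_gapPoints hx hξ), gapPoints,
    prod_biUnion (pairwiseDisjoint_pairs hx hξ)]
  exact congrArg _ (prod_congr rfl fun i hi => prod_pair (hξ i hi).2.ne)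

theorem sub_mul_sub_pos_of_notMem_Ioc (hξ : ξ i ∈ Ioo (x i.castSucc) (x i.succ))
    (hy : y ∉ Ioc (x i.castSucc) (x i.succ)) : 0 < (y - ξ i) * (y - x i.succ) := by
  rw [Set.mem_Ioc, not_and_or, not_lt, not_le] at hy
  rcases hy with hy | hy
  · exact mul_pos_of_neg_of_neg (by linarith [hξ.1]) (by linarith [hξ.1, hξ.2])
  · exact mul_pos (by linarith [hξ.2]) (by linarith)

theorem prod_sub_mul_sub_pos (hξ : ∀ i ∈ s, ξ i ∈ Ioo (x i.castSucc) (x i.succ))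
    (hy : ∀ i ∈ s, y ∉ Ioc (x i.castSucc) (x i.succ)) :
    0 < ∏ i ∈ s, (y - ξ i) * (y - x i.succ) :=
  prod_pos fun i hi => sub_mul_sub_pos_of_notMem_Ioc (hξ i hi) (hy i hi)

theorem sub_mul_prod_erase_pos (hx : StrictMono x)
    (hξ : ∀ i ∈ s.erase k, ξ i ∈ Ioo (x i.castSucc) (x i.succ))
    (hy : y ∈ Ioc (x k.castSucc) (x k.succ)) :
    0 < (y - x 0) * ∏ i ∈ s.erase k, (y - ξ i) * (y - x i.succ) := by
  refine mul_pos (sub_pos.2 ((hx.monotone (Fin.zero_le _)).trans_lt hy.1))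
    (prod_sub_mul_sub_pos hξ fun i hi hyi => ?_)
  exact Set.disjoint_left.1 (hx.disjoint_Ioc_castSucc_succ (ne_of_mem_erase hi)) hyi hy

noncomputable def gapProduct (x : Fin (n + 1) → ℝ) (ξ : Fin n → ℝ) (j : Fin n) (y : ℝ) : ℝ :=
  (y - x 0) * ∏ i ∈ univ.erase j, (y - ξ i) * (y - x i.succ)

theorem gapProduct_neg_of_lt (hx : StrictMono x)
    (hξ : ∀ i ≠ j, ξ i ∈ Ioo (x i.castSucc) (x i.succ)) (hy : y < x 0) :
    gapProduct x ξ j y < 0 :=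
  mul_neg_of_neg_of_pos (sub_neg.2 hy) <| prod_sub_mul_sub_pos
    (fun i hi => hξ i (ne_of_mem_erase hi))
    fun _ _ hyi => hy.not_ge ((hx.monotone (Fin.zero_le _)).trans hyi.1.le)

theorem gapProduct_pos_of_gt (hx : StrictMono x)
    (hξ : ∀ i ≠ j, ξ i ∈ Ioo (x i.castSucc) (x i.succ)) (hy : x (Fin.last n) < y) :
    0 < gapProduct x ξ j y :=
  mul_pos (sub_pos.2 ((hx.monotone (Fin.zero_le _)).trans_lt hy)) <| prod_sub_mul_sub_pos
    (fun i hi => hξ i (ne_of_mem_erase hi))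
    fun _ _ hyi => hy.not_ge (hyi.2.trans (hx.monotone (Fin.le_last _)))

theorem gapProduct_pos_of_mem_Ioo (hx : StrictMono x)
    (hξ : ∀ i ≠ j, ξ i ∈ Ioo (x i.castSucc) (x i.succ)) (hy : y ∈ Ioo (x j.castSucc) (x j.succ)) :
    0 < gapProduct x ξ j y :=
  sub_mul_prod_erase_pos hx (fun i hi => hξ i (ne_of_mem_erase hi)) (Ioo_subset_Ioc_self hy)

theorem gapProduct_eq_mul (hk : k ≠ j) (y : ℝ) :
    gapProduct x ξ j y = (y - ξ k) * (y - x k.succ) *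
      ((y - x 0) * ∏ i ∈ (univ.erase j).erase k, (y - ξ i) * (y - x i.succ)) := by
  rw [gapProduct, ← mul_prod_erase _ _ (mem_erase.2 ⟨hk, mem_univ k⟩)]
  ring

theorem gapProduct_pos_of_mem_Ioo_left (hx : StrictMono x)
    (hξ : ∀ i ≠ j, ξ i ∈ Ioo (x i.castSucc) (x i.succ)) (hk : k ≠ j)
    (hy : y ∈ Ioo (x k.castSucc) (ξ k)) : 0 < gapProduct x ξ j y := by
  rw [gapProduct_eq_mul hk]
  refine mul_pos (mul_pos_of_neg_of_neg (by linarith [hy.2]) (by linarith [hy.2, (hξ k hk).2]))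
    (sub_mul_prod_erase_pos hx (fun i hi => hξ i (ne_of_mem_erase (mem_of_mem_erase hi)))
      ⟨hy.1, (hy.2.trans (hξ k hk).2).le⟩)

theorem gapProduct_neg_of_mem_Ioo_right (hx : StrictMono x)
    (hξ : ∀ i ≠ j, ξ i ∈ Ioo (x i.castSucc) (x i.succ)) (hk : k ≠ j)
    (hy : y ∈ Ioo (ξ k) (x k.succ)) : gapProduct x ξ j y < 0 := by
  rw [gapProduct_eq_mul hk]
  refine mul_neg_of_neg_of_pos (mul_neg_of_pos_of_neg (by linarith [hy.1]) (by linarith [hy.2]))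
    (sub_mul_prod_erase_pos hx (fun i hi => hξ i (ne_of_mem_erase (mem_of_mem_erase hi)))
      ⟨(hξ k hk).1.trans hy.1, hy.2.le⟩)

end GapPoints

namespace Polynomial

variable {n : ℕ} {x : Fin (n + 1) → ℝ} {ξ : Fin n → ℝ} {j : Fin n} {P : ℝ[X]} {c : ℝ}

theorem exists_rolle_points (P : ℝ[X]) (hx : StrictMono x) :
    ∃ ξ : Fin n → ℝ, ∀ i, P.eval (x i.castSucc) = P.eval (x i.succ) →
      ξ i ∈ Ioo (x i.castSucc) (x i.succ) ∧ (derivative P).eval (ξ i) = 0 := by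
  have h : ∀ i : Fin n, ∃ z, P.eval (x i.castSucc) = P.eval (x i.succ) →
      z ∈ Ioo (x i.castSucc) (x i.succ) ∧ (derivative P).eval z = 0 := fun i => by
    by_cases hflat : P.eval (x i.castSucc) = P.eval (x i.succ)
    · obtain ⟨z, hz, hz0⟩ := P.exists_derivative_eval_eq_zero (hx Fin.castSucc_lt_succ) hflat
      exact ⟨z, fun _ => ⟨hz, hz0⟩⟩
    · exact ⟨0, fun h => absurd h hflat⟩
  choose ξ hξ using h
  exact ⟨ξ, hξ⟩

theorem derivative_eval_eq_leadingCoeff_mul_gapProduct (hx : StrictMono x)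
    (hξ : ∀ i ≠ j, ξ i ∈ Ioo (x i.castSucc) (x i.succ))
    (hξroot : ∀ i ≠ j, (derivative P).eval (ξ i) = 0)
    (hcrit : ∀ k, k ≠ j.succ → (derivative P).eval (x k) = 0)
    (hdeg : P.natDegree ≤ 2 * n) (hP : derivative P ≠ 0) (y : ℝ) :
    (derivative P).eval y = (derivative P).leadingCoeff * gapProduct x ξ j y := by
  have hξ' : ∀ i ∈ univ.erase j, ξ i ∈ Ioo (x i.castSucc) (x i.succ) :=
    fun i hi => hξ i (ne_of_mem_erase hi)
  set T := insert (x 0) (gapPoints x ξ (univ.erase j))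
  have hroot : ∀ z ∈ T, (derivative P).IsRoot z := by
    simp only [T, gapPoints, Finset.mem_insert, Finset.mem_biUnion, Finset.mem_singleton]
    rintro z (rfl | ⟨i, hi, rfl | rfl⟩)
    · exact hcrit 0 (Fin.succ_ne_zero j).symm
    · exact hξroot i (ne_of_mem_erase hi)
    · exact hcrit i.succ (Fin.succ_injective _ |>.ne (ne_of_mem_erase hi))
  have hcard : #T = 2 * (n - 1) + 1 := by
    rw [card_insert_of_notMem (zero_notMem_gapPoints hx hξ'), card_gapPoints hx hξ',
      card_erase_of_mem (mem_univ j), card_univ, Fintype.card_fin]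
  have hdeg' : (derivative P).natDegree ≤ #T := by
    have := natDegree_derivative_le P
    have := j.pos
    omega
  have h := congrArg (eval y) (eq_C_leadingCoeff_mul_prod_X_sub_C hP hroot hdeg')
  simp only [eval_mul, eval_C, eval_prod, eval_sub, eval_X] at h
  rwa [prod_insert_gapPoints hx hξ'] at h

theorem exists_pos_derivative_eval_eq_mul_gapProduct (hx : StrictMono x)
    (hξ : ∀ i ≠ j, ξ i ∈ Ioo (x i.castSucc) (x i.succ))
    (hξroot : ∀ i ≠ j, (derivative P).eval (ξ i) = 0)
    (hcrit : ∀ k, k ≠ j.succ → (derivative P).eval (x k) = 0)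
    (hdeg : P.natDegree ≤ 2 * n) (hrise : P.eval (x j.castSucc) < P.eval (x j.succ)) :
    ∃ c > 0, ∀ y, (derivative P).eval y = c * gapProduct x ξ j y := by
  have hP : derivative P ≠ 0 := fun h => by
    rw [eq_C_of_derivative_eq_zero h, eval_C, eval_C] at hrise
    exact hrise.false
  have hP' := derivative_eval_eq_leadingCoeff_mul_gapProduct hx hξ hξroot hcrit hdeg hP
  refine ⟨_, ?_, hP'⟩
  have hxj := hx (Fin.castSucc_lt_succ (i := j))
  obtain ⟨z, hz, hslope⟩ := P.exists_derivative_eval_eq_slope hxj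
  have hz_pos : 0 < (derivative P).eval z := by
    rw [hslope]
    exact div_pos (sub_pos.2 hrise) (sub_pos.2 hxj)
  rw [hP'] at hz_pos
  exact pos_of_mul_pos_left hz_pos (gapProduct_pos_of_mem_Ioo hx hξ hz).le

theorem eval_zero_le_eval_of_le (hx : StrictMono x)
    (hξ : ∀ i ≠ j, ξ i ∈ Ioo (x i.castSucc) (x i.succ)) (hc : 0 < c)
    (hP' : ∀ y, (derivative P).eval y = c * gapProduct x ξ j y) {y : ℝ} (hy : y ≤ x 0) :
    P.eval (x 0) ≤ P.eval y := by
  refine (P.strictAntiOn_eval_of_derivative_neg (convex_Iic (x 0)) fun t ht => ?_).antitoneOn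
    hy self_mem_Iic hy
  rw [interior_Iic] at ht
  rw [hP']
  exact mul_neg_of_pos_of_neg hc (gapProduct_neg_of_lt hx hξ ht)

theorem eval_last_le_eval_of_ge (hx : StrictMono x)
    (hξ : ∀ i ≠ j, ξ i ∈ Ioo (x i.castSucc) (x i.succ)) (hc : 0 < c)
    (hP' : ∀ y, (derivative P).eval y = c * gapProduct x ξ j y) {y : ℝ}
    (hy : x (Fin.last n) ≤ y) : P.eval (x (Fin.last n)) ≤ P.eval y := by
  refine (P.strictMonoOn_eval_of_derivative_pos (convex_Ici _) fun t ht => ?_).monotoneOn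
    self_mem_Ici hy hy
  rw [interior_Ici] at ht
  rw [hP']
  exact mul_pos hc (gapProduct_pos_of_gt hx hξ ht)

theorem min_eval_le_eval_of_mem_Icc (hx : StrictMono x)
    (hξ : ∀ i ≠ j, ξ i ∈ Ioo (x i.castSucc) (x i.succ)) (hc : 0 < c)
    (hP' : ∀ y, (derivative P).eval y = c * gapProduct x ξ j y) (k : Fin n) {y : ℝ}
    (hy : y ∈ Icc (x k.castSucc) (x k.succ)) :
    min (P.eval (x k.castSucc)) (P.eval (x k.succ)) ≤ P.eval y := by
  by_cases hk : k = j
  · subst hk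
    refine P.min_eval_le_eval_of_derivative_pos_of_neg (hx Fin.castSucc_lt_succ).le le_rfl
      (fun t ht => ?_) (fun t ht => absurd ht (by simp)) hy
    rw [hP']
    exact mul_pos hc (gapProduct_pos_of_mem_Ioo hx hξ ht)
  · refine P.min_eval_le_eval_of_derivative_pos_of_neg (hξ k hk).1.le (hξ k hk).2.le
      (fun t ht => ?_) (fun t ht => ?_) hy
    · rw [hP']
      exact mul_pos hc (gapProduct_pos_of_mem_Ioo_left hx hξ hk ht)
    · rw [hP']
      exact mul_neg_of_pos_of_neg hc (gapProduct_neg_of_mem_Ioo_right hx hξ hk ht)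

theorem hermite_step_majorant (hx : StrictMono x) (hdeg : P.natDegree ≤ 2 * n)
    (hPval : ∀ k, P.eval (x k) = if j.succ ≤ k then 1 else 0)
    (hPder : ∀ k, k ≠ j.succ → (derivative P).eval (x k) = 0) :
    (∀ y, x j.succ ≤ y → 1 ≤ P.eval y) ∧ ∀ y, 0 ≤ P.eval y := by
  have hflat : ∀ i ≠ j, P.eval (x i.castSucc) = P.eval (x i.succ) := fun i hi => by
    rcases hi.lt_or_gt with h | h
    · simp [hPval, h.not_ge, Fin.succ_le_castSucc_iff.not.2 h.not_gt]
    · simp [hPval, h.le, Fin.succ_le_castSucc_iff.2 h]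
  obtain ⟨ξ, hξ⟩ := P.exists_rolle_points hx
  have hξmem := fun i (hi : i ≠ j) => (hξ i (hflat i hi)).1
  obtain ⟨c, hc, hP'⟩ := exists_pos_derivative_eval_eq_mul_gapProduct hx hξmem
    (fun i hi => (hξ i (hflat i hi)).2) hPder hdeg (by simp [hPval])
  have hnodes : ∀ k, 0 ≤ P.eval (x k) := fun k => by rw [hPval]; split_ifs <;> norm_num
  have hlast : P.eval (x (Fin.last n)) = 1 := by simp [hPval, Fin.le_last]
  refine ⟨fun y hy => ?_, fun y => ?_⟩
  · rcases lt_or_ge y (x (Fin.last n)) with hyl | hyl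
    · obtain ⟨k, hk⟩ :=
        Fin.exists_mem_Ico_castSucc_succ x ((hx.monotone (Fin.zero_le _)).trans hy) hyl
      have hjk : j < k := Fin.succ_lt_succ_iff.1 (hx.lt_iff_lt.1 (hy.trans_lt hk.2))
      have := min_eval_le_eval_of_mem_Icc hx hξmem hc hP' k (Ico_subset_Icc_self hk)
      rwa [← hflat k hjk.ne', hPval, if_pos (Fin.succ_le_castSucc_iff.2 hjk), min_self] at this
    · exact hlast.symm.le.trans (eval_last_le_eval_of_ge hx hξmem hc hP' hyl)
  · rcases le_or_gt y (x 0) with hy0 | hy0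
    · exact (hnodes 0).trans (eval_zero_le_eval_of_le hx hξmem hc hP' hy0)
    rcases lt_or_ge y (x (Fin.last n)) with hyl | hyl
    · obtain ⟨k, hk⟩ := Fin.exists_mem_Ico_castSucc_succ x hy0.le hyl
      exact (le_min (hnodes _) (hnodes _)).trans
        (min_eval_le_eval_of_mem_Icc hx hξmem hc hP' k (Ico_subset_Icc_self hk))
    · exact (hnodes _).trans (eval_last_le_eval_of_ge hx hξmem hc hP' hyl)

theorem eval_eq_one_of_hermite_flat (hx : StrictMono x) (hdeg : P.natDegree ≤ 2 * n)
    (hPval : ∀ k, P.eval (x k) = 1) (hPder : ∀ k, k ≠ 0 → (derivative P).eval (x k) = 0)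
    (y : ℝ) : P.eval y = 1 := by
  obtain ⟨ξ, hξ⟩ := P.exists_rolle_points hx
  have hflat : ∀ i : Fin n, P.eval (x i.castSucc) = P.eval (x i.succ) := by simp [hPval]
  have hξmem : ∀ i ∈ (univ : Finset (Fin n)), ξ i ∈ Ioo (x i.castSucc) (x i.succ) :=
    fun i _ => (hξ i (hflat i)).1
  have hroot : ∀ z ∈ gapPoints x ξ univ, (derivative P).IsRoot z := by
    simp only [gapPoints, Finset.mem_biUnion, Finset.mem_insert, Finset.mem_singleton]
    rintro z ⟨i, -, rfl | rfl⟩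
    · exact (hξ i (hflat i)).2
    · exact hPder i.succ (Fin.succ_ne_zero i)
  have hP : derivative P = 0 := derivative_eq_zero_of_natDegree_le_card hroot (by
    rw [card_gapPoints hx hξmem, card_univ, Fintype.card_fin]
    exact hdeg)
  have h0 := hPval 0
  rwa [eq_C_of_derivative_eq_zero hP, eval_C] at h0 ⊢

end Polynomial

open MeasureTheory Polynomial

theorem cms_majorant_general
    (n₀ : ℕ)
    (x : Fin n₀ → ℝ) (hx : StrictMono x)
    (k₀ : Fin n₀)
    (P : Polynomial ℝ)
    (hPdeg : P.degree ≤ (2 * n₀ - 2 : ℕ))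
    (hPval : ∀ k, P.eval (x k) = if k₀ ≤ k then 1 else 0)
    (hPder : ∀ k, k ≠ k₀ → (Polynomial.derivative P).eval (x k) = 0) :
    (∀ y : ℝ, x k₀ ≤ y → 1 ≤ P.eval y) ∧
    (∀ y : ℝ, y < x k₀ → 0 ≤ P.eval y) ∧
    (∀ y : ℝ, Set.indicator (Set.Ici (x k₀)) (fun _ => (1 : ℝ)) y ≤ P.eval y) := by
  obtain ⟨n, rfl⟩ := Nat.exists_eq_add_one.2 k₀.pos
  have hdeg : P.natDegree ≤ 2 * n :=
    natDegree_le_iff_degree_le.2 (by rwa [show 2 * (n + 1) - 2 = 2 * n by omega] at hPdeg)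
  obtain ⟨hge, hnonneg⟩ : (∀ y, x k₀ ≤ y → 1 ≤ P.eval y) ∧ ∀ y, 0 ≤ P.eval y := by
    cases k₀ using Fin.cases with
    | zero =>
      have hconst := eval_eq_one_of_hermite_flat hx hdeg (by simpa using hPval) hPder
      exact ⟨fun y _ => (hconst y).ge, fun y => by rw [hconst]; exact zero_le_one⟩
    | succ j => exact hermite_step_majorant hx hdeg hPval hPder
  refine ⟨hge, fun y _ => hnonneg y, fun y => ?_⟩
  by_cases hy : y ∈ Ici (x k₀)
  · rw [indicator_of_mem hy]
    exact hge y hy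
  · rw [indicator_of_notMem hy]
    exact hnonneg y

/-- **Chebyshev–Markov–Stieltjes majorant.** Let `σ` be a probability measure on `ℝ`
with finite moments, `(S n)` orthogonal polynomials for `σ` with `deg S n = n`, and
`x 0 < ⋯ < x (n₀-1)` the zeros of `S n₀`. If `P` is the Hermite interpolation
polynomial of degree ≤ 2n₀-2 with `P(x k) = 0` for `k < k₀`, `P(x k) = 1` for
`k ≥ k₀`, and `P'(x k) = 0` for `k ≠ k₀`, then `P(y) ≥ 1` for `y ≥ x k₀` and
`P(y) ≥ 0` for `y < x k₀`; in particular `P ≥ 𝟙_{[x k₀, ∞)}` pointwise. -/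
theorem cms_majorant
    (σ : Measure ℝ) [IsProbabilityMeasure σ]
    (hmom : ∀ k : ℕ, Integrable (fun t => t ^ k) σ)
    (S : ℕ → Polynomial ℝ)
    (hdeg : ∀ n, (S n).degree = n)
    (horth : ∀ m n : ℕ, m ≠ n → ∫ t, (S m).eval t * (S n).eval t ∂σ = 0)
    (n₀ : ℕ) (hn₀ : 1 ≤ n₀)
    (x : Fin n₀ → ℝ) (hx : StrictMono x)
    (hroot : ∀ k, (S n₀).eval (x k) = 0)
    (k₀ : Fin n₀)
    (P : Polynomial ℝ)
    (hPdeg : P.degree ≤ (2 * n₀ - 2 : ℕ))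
    (hPval : ∀ k, P.eval (x k) = if k₀ ≤ k then 1 else 0)
    (hPder : ∀ k, k ≠ k₀ → (Polynomial.derivative P).eval (x k) = 0) :
    (∀ y : ℝ, x k₀ ≤ y → 1 ≤ P.eval y) ∧
    (∀ y : ℝ, y < x k₀ → 0 ≤ P.eval y) ∧
    (∀ y : ℝ, Set.indicator (Set.Ici (x k₀)) (fun _ => (1 : ℝ)) y ≤ P.eval y) :=
  cms_majorant_general n₀ x hx k₀ P hPdeg hPval hPder
end

section
/- With the same notation, let Q be the unique polynomial of degree ≤ 2n₀-2 satisfying Q(x_k) = 0 for k ≤ k₀, Q(x_k) = 1 for k > k₀, and Q'(x_k) = 0 for all k ≠ k₀. Then Q(x) ≤ 0 for x ≤ x_{k₀} and Q(x) ≤ 1 for x > x_{k₀}; in particular Q ≤ 𝟙_{(x_{k₀},∞)} on ℝ. -/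
/-!
For `x k₀ ≤ c < x (k₀ + 1)`, the interpolation conditions give `Q` at least `2k₀ + 1` roots in
`(-∞, c]` (double at `x j` for `j < k₀`, simple at `x k₀`) and `Q - 1` at least
`2(n₀ - 1 - k₀)` roots in `(c, ∞)` (double at `x j` for `j > k₀`), counted with multiplicity.
Rolle's theorem on each half-line then gives `Q'` at least `2n₀ - 3` roots, its maximal number,
so there are no other roots. Writing `Q = ∏_{j<k₀} (X - x j)² (X - x k₀) A` and
`Q - 1 = ∏_{j>k₀} (X - x j)² B`, the factor `A` has no root on `(-∞, x (k₀ + 1)]` and `B` none on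
`[x k₀, ∞)`, and the values `Q (x (k₀ + 1)) = 1`, `Q (x k₀) = 0` force `A > 0` and `B < 0`
there. If `k₀` is the last node, the `2n₀ - 1` forced roots exceed the degree and `Q = 0`.
-/

open MeasureTheory Polynomial Set Multiset

namespace Polynomial

theorem card_roots_filter_le_derivative (p : ℝ[X]) (I : Set ℝ) [I.OrdConnected]
    [DecidablePred (· ∈ I)] :
    card (p.roots.filter (· ∈ I)) ≤ card ((derivative p).roots.filter (· ∈ I)) + 1 := by
  rcases eq_or_ne (derivative p) 0 with hp' | hp'
  · rw [eq_C_of_derivative_eq_zero hp']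
    simp
  have hp : p ≠ 0 := ne_of_apply_ne derivative (by rwa [derivative_zero])
  set M := p.roots.filter (· ∈ I)
  set M' := (derivative p).roots.filter (· ∈ I)
  have hrolle : M.toFinset.card ≤ (M'.toFinset \ M.toFinset).card + 1 := by
    refine Finset.card_le_sdiff_of_interleaved fun a ha b hb hab _ => ?_
    simp only [M, Multiset.mem_toFinset, Multiset.mem_filter, mem_roots hp, IsRoot] at ha hb
    obtain ⟨z, hz, hz0⟩ := exists_deriv_eq_zero hab p.continuousOn (ha.1.trans hb.1.symm)
    refine ⟨z, ?_, hz⟩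
    simp only [M', Multiset.mem_toFinset, Multiset.mem_filter, mem_roots hp', IsRoot, ← p.deriv]
    exact ⟨hz0, Set.Icc_subset I ha.2 hb.2 (Ioo_subset_Icc_self hz)⟩
  have hmult : ∀ a ∈ M.toFinset, M.count a ≤ M'.count a + 1 := by
    intro a ha
    have haI : a ∈ I := (Multiset.mem_filter.1 (Multiset.mem_toFinset.1 ha)).2
    rw [count_filter_of_pos haI, count_filter_of_pos haI, count_roots, count_roots]
    have := rootMultiplicity_sub_one_le_derivative_rootMultiplicity p a
    omega
  have hnew : (M'.toFinset \ M.toFinset).card ≤ ∑ a ∈ M'.toFinset \ M.toFinset, M'.count a := by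
    rw [Finset.card_eq_sum_ones]
    exact Finset.sum_le_sum fun a ha =>
      one_le_count_iff_mem.2 (Multiset.mem_toFinset.1 (Finset.mem_sdiff.1 ha).1)
  calc card M = ∑ a ∈ M.toFinset, M.count a := (toFinset_sum_count_eq M).symm
    _ ≤ ∑ a ∈ M.toFinset, (M'.count a + 1) := Finset.sum_le_sum hmult
    _ = ∑ a ∈ M.toFinset, M'.count a + M.toFinset.card := by
      rw [Finset.sum_add_distrib, Finset.card_eq_sum_ones]
    _ ≤ ∑ a ∈ M.toFinset ∪ M'.toFinset, M'.count a + 1 := by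
      rw [← Finset.union_sdiff_self_eq_union, Finset.sum_union Finset.disjoint_sdiff]
      omega
    _ = card M' + 1 := by
      rw [sum_count_eq_card fun a ha => Finset.mem_union_right _ (Multiset.mem_toFinset.2 ha)]

theorem card_roots_filter_Iic_add_card_roots_sub_filter_Ioi_le (p : ℝ[X]) (a c : ℝ) :
    card (p.roots.filter (· ∈ Iic c)) + card ((p - C a).roots.filter (· ∈ Ioi c)) ≤
      card (derivative p).roots + 2 := by
  have hle := card_roots_filter_le_derivative p (Iic c)
  have hgt := card_roots_filter_le_derivative (p - C a) (Ioi c)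
  rw [derivative_sub, derivative_C, sub_zero] at hgt
  have hsplit := congrArg card (filter_add_not (· ∈ Iic c) (derivative p).roots)
  simp only [Set.mem_Iic, not_le, card_add] at hsplit
  simp only [Set.mem_Iic, Set.mem_Ioi] at hle hgt ⊢
  omega

variable {R : Type*} [CommRing R]

theorem eval_prod_map_X_sub_C {ι : Type*} (J : Finset ι) (x : ι → R) (y : R) :
    ((J.val.map x).map fun a => X - C a).prod.eval y = ∏ j ∈ J, (y - x j) := by
  simp only [Multiset.map_map, Function.comp_apply, Finset.prod_map_val, eval_prod, eval_sub,
    eval_X, eval_C]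

section IsDomain

variable [IsDomain R]

theorem eval_ne_zero_of_card_roots_filter_le {p A : R[X]} {s : Multiset R} {I : Set R}
    [DecidablePred (· ∈ I)] (hp : p ≠ 0) (hpA : p = (s.map fun a => X - C a).prod * A)
    (hs : ∀ a ∈ s, a ∈ I) (hcard : card (p.roots.filter (· ∈ I)) ≤ card s) {t : R}
    (ht : t ∈ I) : A.eval t ≠ 0 := by
  have hA : A ≠ 0 := by
    rintro rfl
    exact hp (by simpa using hpA)
  have hroots : p.roots = s + A.roots := by
    rw [hpA, roots_mul (hpA ▸ hp), roots_multiset_prod_X_sub_C]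
  rw [hroots, filter_add, filter_eq_self.2 hs, card_add] at hcard
  have : t ∉ A.roots.filter (· ∈ I) := by
    intro hmem
    have := card_pos_iff_exists_mem.2 ⟨t, hmem⟩
    omega
  simpa [mem_roots hA, ht] using this

theorem map_add_map_le_roots {ι : Type*} {p : R[X]} (hp : p ≠ 0) {x : ι → R}
    (hx : Function.Injective x) {J K : Finset ι} (hJK : J ⊆ K)
    (hroot : ∀ k ∈ K, p.IsRoot (x k)) (hder : ∀ j ∈ J, (derivative p).IsRoot (x j)) :
    J.val.map x + K.val.map x ≤ p.roots := by
  classical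
  rw [Multiset.le_iff_count]
  intro a
  rw [count_roots, count_add]
  by_cases ha : ∃ k, x k = a
  · obtain ⟨k, rfl⟩ := ha
    rw [count_map_eq_count' x _ hx, count_map_eq_count' x _ hx, count_eq_of_nodup J.nodup,
      count_eq_of_nodup K.nodup]
    by_cases hkJ : k ∈ J
    · have := (one_lt_rootMultiplicity_iff_isRoot hp).2 ⟨hroot k (hJK hkJ), hder k hkJ⟩
      simp only [Finset.mem_val, hkJ, hJK hkJ, if_true]
      omega
    · by_cases hkK : k ∈ K
      · have := (rootMultiplicity_pos hp).2 (hroot k hkK)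
        simp only [Finset.mem_val, hkJ, hkK, if_true, if_false]
        omega
      · simp [hkJ, hkK]
  · push Not at ha
    simp [ha]

end IsDomain

end Polynomial

theorem IsPreconnected.pos_of_forall_ne_zero {X α : Type*} [TopologicalSpace X] [LinearOrder α]
    [TopologicalSpace α] [OrderClosedTopology α] [Zero α] {s : Set X} (hs : IsPreconnected s)
    {f : X → α} (hf : ContinuousOn f s) (hne : ∀ t ∈ s, f t ≠ 0) {a b : X} (ha : a ∈ s)
    (hb : b ∈ s) (hfa : 0 < f a) : 0 < f b := by
  by_contra! h
  obtain ⟨t, ht, hft⟩ := hs.intermediate_value hb ha hf ⟨h, hfa.le⟩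
  exact hne t ht hft

namespace ChebyshevMarkovStieltjes

variable {n : ℕ} {x : Fin n → ℝ} {k₀ : Fin n} {Q : ℝ[X]}

-- The roots, with multiplicity, that the interpolation conditions force on `Q` and on `Q - 1`.
def lowerNodes (x : Fin n → ℝ) (k₀ : Fin n) : Multiset ℝ :=
  (Finset.Iio k₀).val.map x + (Finset.Iic k₀).val.map x

def upperNodes (x : Fin n → ℝ) (k₀ : Fin n) : Multiset ℝ :=
  (Finset.Ioi k₀).val.map x + (Finset.Ioi k₀).val.map x

theorem card_lowerNodes : card (lowerNodes x k₀) = 2 * k₀ + 1 := by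
  rw [lowerNodes, card_add, card_map, card_map, Finset.card_val, Finset.card_val, Fin.card_Iio,
    Fin.card_Iic]
  ring

theorem card_upperNodes : card (upperNodes x k₀) = 2 * (n - 1 - k₀) := by
  rw [upperNodes, card_add, card_map, Finset.card_val, Fin.card_Ioi]
  ring

theorem le_of_mem_lowerNodes (hx : Monotone x) {a : ℝ} (ha : a ∈ lowerNodes x k₀) :
    a ≤ x k₀ := by
  simp only [lowerNodes, Multiset.mem_add, Multiset.mem_map, Finset.mem_val, Finset.mem_Iio,
    Finset.mem_Iic] at ha
  obtain ⟨j, hj, rfl⟩ | ⟨j, hj, rfl⟩ := ha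
  exacts [hx hj.le, hx hj]

theorem lt_of_mem_upperNodes {c : ℝ} (hc : ∀ k, k₀ < k → c < x k) {a : ℝ}
    (ha : a ∈ upperNodes x k₀) : c < a := by
  simp only [upperNodes, Multiset.mem_add, or_self, Multiset.mem_map, Finset.mem_val,
    Finset.mem_Ioi] at ha
  obtain ⟨j, hj, rfl⟩ := ha
  exact hc j hj

theorem eval_prod_lowerNodes (y : ℝ) :
    ((lowerNodes x k₀).map fun a => X - C a).prod.eval y =
      (∏ j ∈ Finset.Iio k₀, (y - x j)) ^ 2 * (y - x k₀) := by
  rw [lowerNodes, Multiset.map_add, prod_add, eval_mul, eval_prod_map_X_sub_C,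
    eval_prod_map_X_sub_C, ← Finset.Iio_insert, Finset.prod_insert Finset.notMem_Iio_self]
  ring

theorem eval_prod_upperNodes (y : ℝ) :
    ((upperNodes x k₀).map fun a => X - C a).prod.eval y =
      (∏ j ∈ Finset.Ioi k₀, (y - x j)) ^ 2 := by
  rw [upperNodes, Multiset.map_add, prod_add, eval_mul, eval_prod_map_X_sub_C, sq]

theorem lowerNodes_le_roots (hx : Function.Injective x) (hQ : Q ≠ 0)
    (hQval : ∀ k, Q.eval (x k) = if k₀ < k then 1 else 0)
    (hQder : ∀ k, k ≠ k₀ → (derivative Q).eval (x k) = 0) :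
    lowerNodes x k₀ ≤ Q.roots :=
  map_add_map_le_roots hQ hx Finset.Iio_subset_Iic_self
    (fun k hk => by simp [hQval, not_lt.2 (Finset.mem_Iic.1 hk)])
    (fun k hk => hQder k (Finset.mem_Iio.1 hk).ne)

theorem ne_zero_of_lt (hQval : ∀ k, Q.eval (x k) = if k₀ < k then 1 else 0) {k₁ : Fin n}
    (hk₁ : k₀ < k₁) : Q ≠ 0 := fun h => by
  simpa [h, hk₁] using hQval k₁

theorem sub_C_one_ne_zero (hQval : ∀ k, Q.eval (x k) = if k₀ < k then 1 else 0) :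
    Q - C 1 ≠ 0 := fun h => by
  simpa [hQval] using congrArg (eval (x k₀)) (sub_eq_zero.1 h)

theorem upperNodes_le_roots_sub_one (hx : Function.Injective x)
    (hQval : ∀ k, Q.eval (x k) = if k₀ < k then 1 else 0)
    (hQder : ∀ k, k ≠ k₀ → (derivative Q).eval (x k) = 0) :
    upperNodes x k₀ ≤ (Q - C 1).roots := by
  refine map_add_map_le_roots (sub_C_one_ne_zero hQval) hx subset_rfl (fun k hk => ?_)
    fun k hk => ?_
  · simp [hQval, Finset.mem_Ioi.1 hk]
  · simpa using hQder k (Finset.mem_Ioi.1 hk).ne'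

theorem eq_zero_of_forall_le (hx : Function.Injective x) (hQdeg : Q.natDegree ≤ 2 * n - 2)
    (hQval : ∀ k, Q.eval (x k) = if k₀ < k then 1 else 0)
    (hQder : ∀ k, k ≠ k₀ → (derivative Q).eval (x k) = 0) (hlast : ∀ k, k ≤ k₀) : Q = 0 := by
  by_contra hQ
  have hk₀ : n - 1 ≤ k₀ := Fin.le_def.1 (hlast ⟨n - 1, by have := k₀.isLt; omega⟩)
  have := (card_le_card (lowerNodes_le_roots hx hQ hQval hQder)).trans (card_roots' Q)
  rw [card_lowerNodes] at this
  omega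

theorem card_roots_filter_le_card_nodes (hx : StrictMono x) (hQdeg : Q.natDegree ≤ 2 * n - 2)
    (hQval : ∀ k, Q.eval (x k) = if k₀ < k then 1 else 0)
    (hQder : ∀ k, k ≠ k₀ → (derivative Q).eval (x k) = 0) {k₁ : Fin n} (hk₁ : k₀ < k₁) {c : ℝ}
    (hc₀ : x k₀ ≤ c) (hc₁ : ∀ k, k₀ < k → c < x k) :
    card (Q.roots.filter (· ∈ Iic c)) ≤ card (lowerNodes x k₀) ∧
      card ((Q - C 1).roots.filter (· ∈ Ioi c)) ≤ card (upperNodes x k₀) := by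
  have hQ := ne_zero_of_lt hQval hk₁
  have hlower : card (lowerNodes x k₀) ≤ card (Q.roots.filter (· ∈ Iic c)) := by
    refine card_le_card ?_
    rw [← filter_eq_self.2 fun a ha => (le_of_mem_lowerNodes hx.monotone ha).trans hc₀]
    exact filter_le_filter _ (lowerNodes_le_roots hx.injective hQ hQval hQder)
  have hupper : card (upperNodes x k₀) ≤ card ((Q - C 1).roots.filter (· ∈ Ioi c)) := by
    refine card_le_card ?_
    rw [← filter_eq_self.2 fun a ha => lt_of_mem_upperNodes hc₁ ha]
    exact filter_le_filter _ (upperNodes_le_roots_sub_one hx.injective hQval hQder)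
  have hderiv : card (derivative Q).roots ≤ 2 * n - 3 :=
    (card_roots' _).trans ((natDegree_derivative_le Q).trans (by omega))
  have hrolle := card_roots_filter_Iic_add_card_roots_sub_filter_Ioi_le Q 1 c
  have hk₁n := k₁.isLt
  rw [card_lowerNodes] at hlower ⊢
  rw [card_upperNodes] at hupper ⊢
  rw [Fin.lt_def] at hk₁
  omega

theorem eval_nonpos_of_le (hx : StrictMono x) (hQdeg : Q.natDegree ≤ 2 * n - 2)
    (hQval : ∀ k, Q.eval (x k) = if k₀ < k then 1 else 0)
    (hQder : ∀ k, k ≠ k₀ → (derivative Q).eval (x k) = 0) {k₁ : Fin n} (hk₁ : k₀ ⋖ k₁)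
    {y : ℝ} (hy : y ≤ x k₀) : Q.eval y ≤ 0 := by
  have hQ := ne_zero_of_lt hQval hk₁.lt
  obtain ⟨A, hA⟩ := (Multiset.prod_X_sub_C_dvd_iff_le_roots hQ _).2
    (lowerNodes_le_roots hx.injective hQ hQval hQder)
  have hA₁ : 0 < A.eval (x k₁) := by
    have h := congrArg (eval (x k₁)) hA
    rw [eval_mul, eval_prod_lowerNodes, hQval, if_pos hk₁.lt] at h
    exact pos_of_mul_pos_right (h ▸ one_pos)
      (mul_nonneg (sq_nonneg _) (sub_nonneg.2 (hx hk₁.lt).le))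
  have hAne : ∀ t ∈ Iic (x k₁), A.eval t ≠ 0 := by
    intro t ht
    rcases (Set.mem_Iic.1 ht).lt_or_eq with ht | rfl
    · have hc₁ : ∀ k, k₀ < k → max t (x k₀) < x k := fun k hk =>
        max_lt (ht.trans_le (hx.monotone (hk₁.ge_of_gt hk))) (hx hk)
      exact eval_ne_zero_of_card_roots_filter_le (I := Iic (max t (x k₀))) hQ hA
        (fun a ha => (le_of_mem_lowerNodes hx.monotone ha).trans (le_max_right _ _))
        (card_roots_filter_le_card_nodes hx hQdeg hQval hQder hk₁.lt (le_max_right _ _) hc₁).1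
        (le_max_left t (x k₀))
    · exact hA₁.ne'
  have hApos : 0 < A.eval y := isPreconnected_Iic.pos_of_forall_ne_zero
    A.continuous.continuousOn hAne (Set.mem_Iic.2 le_rfl) (hy.trans (hx hk₁.lt).le) hA₁
  rw [hA, eval_mul, eval_prod_lowerNodes]
  exact mul_nonpos_of_nonpos_of_nonneg
    (mul_nonpos_of_nonneg_of_nonpos (sq_nonneg _) (sub_nonpos.2 hy)) hApos.le

theorem eval_le_one_of_lt (hx : StrictMono x) (hQdeg : Q.natDegree ≤ 2 * n - 2)
    (hQval : ∀ k, Q.eval (x k) = if k₀ < k then 1 else 0)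
    (hQder : ∀ k, k ≠ k₀ → (derivative Q).eval (x k) = 0) {k₁ : Fin n} (hk₁ : k₀ < k₁)
    {y : ℝ} (hy : x k₀ < y) : Q.eval y ≤ 1 := by
  have hQ := sub_C_one_ne_zero hQval
  have hc : ∀ k, k₀ < k → x k₀ < x k := fun k hk => hx hk
  obtain ⟨B, hB⟩ := (Multiset.prod_X_sub_C_dvd_iff_le_roots hQ _).2
    (upperNodes_le_roots_sub_one hx.injective hQval hQder)
  have hB₀ : 0 < -B.eval (x k₀) := by
    have h := congrArg (eval (x k₀)) hB
    rw [eval_sub, eval_C, hQval, if_neg (lt_irrefl _), zero_sub, eval_mul,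
      eval_prod_upperNodes] at h
    exact neg_pos.2 (neg_of_mul_neg_right (h ▸ neg_one_lt_zero) (sq_nonneg _))
  have hBne : ∀ t ∈ Ici (x k₀), -B.eval t ≠ 0 := by
    intro t ht
    rcases (Set.mem_Ici.1 ht).lt_or_eq with ht | rfl
    · exact neg_ne_zero.2 <| eval_ne_zero_of_card_roots_filter_le (I := Ioi (x k₀)) hQ hB
        (fun a ha => lt_of_mem_upperNodes hc ha)
        (card_roots_filter_le_card_nodes hx hQdeg hQval hQder hk₁ le_rfl hc).2 ht
    · exact hB₀.ne'
  have hBneg : 0 < -B.eval y := isPreconnected_Ici.pos_of_forall_ne_zero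
    B.continuous.neg.continuousOn hBne (Set.mem_Ici.2 le_rfl) hy.le hB₀
  have h := congrArg (eval y) hB
  rw [eval_sub, eval_C, eval_mul, eval_prod_upperNodes] at h
  linarith [mul_nonpos_of_nonneg_of_nonpos (sq_nonneg (∏ j ∈ Finset.Ioi k₀, (y - x j)))
    (neg_pos.1 hBneg).le]

end ChebyshevMarkovStieltjes

theorem cms_minorant_general
    (n₀ : ℕ)
    (x : Fin n₀ → ℝ) (hx : StrictMono x)
    (k₀ : Fin n₀)
    (Q : Polynomial ℝ)
    (hQdeg : Q.degree ≤ (2 * n₀ - 2 : ℕ))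
    (hQval : ∀ k, Q.eval (x k) = if k₀ < k then 1 else 0)
    (hQder : ∀ k, k ≠ k₀ → (Polynomial.derivative Q).eval (x k) = 0) :
    (∀ y : ℝ, y ≤ x k₀ → Q.eval y ≤ 0) ∧
    (∀ y : ℝ, x k₀ < y → Q.eval y ≤ 1) ∧
    (∀ y : ℝ, Q.eval y ≤ Set.indicator (Set.Ioi (x k₀)) (fun _ => (1 : ℝ)) y) := by
  have hdeg := natDegree_le_iff_degree_le.2 hQdeg
  have hmain : (∀ y, y ≤ x k₀ → Q.eval y ≤ 0) ∧ ∀ y, x k₀ < y → Q.eval y ≤ 1 := by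
    by_cases hlast : ∀ k, k ≤ k₀
    · simp [ChebyshevMarkovStieltjes.eq_zero_of_forall_le hx.injective hdeg hQval hQder hlast]
    · obtain ⟨k, hk⟩ := not_forall.1 hlast
      obtain ⟨k₁, hk₁, -⟩ := exists_covBy_le_of_lt (not_le.1 hk)
      exact ⟨fun y => ChebyshevMarkovStieltjes.eval_nonpos_of_le hx hdeg hQval hQder hk₁,
        fun y => ChebyshevMarkovStieltjes.eval_le_one_of_lt hx hdeg hQval hQder hk₁.lt⟩
  refine ⟨hmain.1, hmain.2, fun y => ?_⟩
  by_cases hy : y ∈ Ioi (x k₀)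
  · simpa [indicator_of_mem hy] using hmain.2 y hy
  · simpa [indicator_of_notMem hy] using hmain.1 y (not_lt.1 hy)

/-- **Chebyshev–Markov–Stieltjes minorant.** With `x 0 < ⋯ < x (n₀-1)` the zeros of
the orthogonal polynomial `S n₀`, if `Q` is the Hermite interpolation polynomial of
degree ≤ 2n₀-2 with `Q(x k) = 0` for `k ≤ k₀`, `Q(x k) = 1` for `k > k₀` and
`Q'(x k) = 0` for `k ≠ k₀`, then `Q(y) ≤ 0` for `y ≤ x k₀` and `Q(y) ≤ 1` for
`y > x k₀`; in particular `Q ≤ 𝟙_{(x k₀, ∞)}` pointwise. -/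
theorem cms_minorant
    (σ : Measure ℝ) [IsProbabilityMeasure σ]
    (hmom : ∀ k : ℕ, Integrable (fun t => t ^ k) σ)
    (S : ℕ → Polynomial ℝ)
    (hdeg : ∀ n, (S n).degree = n)
    (horth : ∀ m n : ℕ, m ≠ n → ∫ t, (S m).eval t * (S n).eval t ∂σ = 0)
    (n₀ : ℕ) (hn₀ : 1 ≤ n₀)
    (x : Fin n₀ → ℝ) (hx : StrictMono x)
    (hroot : ∀ k, (S n₀).eval (x k) = 0)
    (k₀ : Fin n₀)
    (Q : Polynomial ℝ)
    (hQdeg : Q.degree ≤ (2 * n₀ - 2 : ℕ))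
    (hQval : ∀ k, Q.eval (x k) = if k₀ < k then 1 else 0)
    (hQder : ∀ k, k ≠ k₀ → (Polynomial.derivative Q).eval (x k) = 0) :
    (∀ y : ℝ, y ≤ x k₀ → Q.eval y ≤ 0) ∧
    (∀ y : ℝ, x k₀ < y → Q.eval y ≤ 1) ∧
    (∀ y : ℝ, Q.eval y ≤ Set.indicator (Set.Ioi (x k₀)) (fun _ => (1 : ℝ)) y) :=
  cms_minorant_general n₀ x hx k₀ Q hQdeg hQval hQder
end

section
/- With P = Σ p_n S_n the Chebyshev–Markov–Stieltjes majorant of 𝟙_{[x_{k₀},∞)}, for each n ≥ 1 one has |p_n| ≤ |∫_{x_{k₀}}^{∞} S_n(x) dσ(x)| + ∫_ℝ R²(x)|S_n(x)| dσ(x), where R(x) = S_{n₀}(x)/(S_{n₀}'(x_{k₀})(x - x_{k₀})). -/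
/-!
The whole bound rests on the pointwise sandwich `𝟙_{[x k₀,∞)} ≤ P ≤ 𝟙_{[x k₀,∞)} + R²`.

For the lower bound, Rolle's theorem gives a zero `ξⱼ` of `P'` in every gap `(x j, x (j+1))`
except the one ending at `x k₀`; with the nodes `x k` (`k ≠ k₀`) these are `2n₀ - 3` distinct zeros.
As `deg P' ≤ 2n₀ - 3` they are all of them (if `k₀` is the first node there are too many and `P`
is constant), so `P'` is a positive multiple of `(X - x 0) ∏ (X - ξⱼ)(X - x (j+1))`: the sign
is fixed by `P` rising from `0` to `1` across the central gap. Hence `P` increases and then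
decreases on every other gap, decreases left of `x 0` and increases right of the last node, so it
never drops below its values at the nodes.

`P - R²` has the same Hermite data, with the pivot shifted past `x k₀`, so the lower bound for
`1 - (P - R²)(-t)` at the reflected nodes gives the upper bound. Finally `pₙ = ∫ P Sₙ dσ` by
orthonormality, and `pₙ - ∫_{[x k₀,∞)} Sₙ dσ = ∫ (P - 𝟙_{[x k₀,∞)}) Sₙ dσ` is at most
`∫ R² |Sₙ| dσ` in absolute value.
-/

open MeasureTheory Polynomial Set

namespace Polynomial

lemma exists_mem_Ioo_derivative_eval_eq_zero (P : ℝ[X]) {a b : ℝ} (hab : a < b)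
    (h : P.eval a = P.eval b) : ∃ c ∈ Ioo a b, (derivative P).eval c = 0 := by
  obtain ⟨c, hc, hd⟩ := exists_deriv_eq_zero hab P.continuousOn h
  exact ⟨c, hc, by rwa [Polynomial.deriv] at hd⟩

lemma eval_le_eval_of_derivative_nonneg (P : ℝ[X]) {a b : ℝ} (hab : a ≤ b)
    (h : ∀ τ ∈ Ioo a b, 0 ≤ (derivative P).eval τ) : P.eval a ≤ P.eval b := by
  refine monotoneOn_of_deriv_nonneg (convex_Icc a b) P.continuousOn
    P.differentiable.differentiableOn (fun τ hτ => ?_) (left_mem_Icc.2 hab)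
    (right_mem_Icc.2 hab) hab
  rw [interior_Icc] at hτ
  rw [Polynomial.deriv]
  exact h τ hτ

lemma eval_le_eval_of_derivative_nonpos (P : ℝ[X]) {a b : ℝ} (hab : a ≤ b)
    (h : ∀ τ ∈ Ioo a b, (derivative P).eval τ ≤ 0) : P.eval b ≤ P.eval a := by
  simpa using (-P).eval_le_eval_of_derivative_nonneg hab (by simpa using h)

lemma derivative_eq_zero_of_dvd_of_natDegree_le {P F : ℝ[X]} (hdvd : F ∣ derivative P)
    (hdeg : P.natDegree ≤ F.natDegree) : derivative P = 0 := by
  by_contra hne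
  have h₁ := natDegree_le_of_dvd hdvd hne
  have h₂ := natDegree_derivative_lt fun h => hne (derivative_eq_zero.2 h)
  omega

lemma isCoprime_X_sub_C_of_ne {a b : ℝ} (h : a ≠ b) : IsCoprime (X - C a) (X - C b) :=
  isCoprime_X_sub_C_of_isUnit_sub (sub_ne_zero.2 h).isUnit

noncomputable def pairProd {ι : Type*} (a b : ι → ℝ) (s : Finset ι) : ℝ[X] :=
  ∏ i ∈ s, (X - C (a i)) * (X - C (b i))

section pairProd

variable {ι : Type*} {a b : ι → ℝ} {s : Finset ι}

lemma monic_pairProd : (pairProd a b s).Monic :=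
  monic_prod_of_monic _ _ fun _ _ => (monic_X_sub_C _).mul (monic_X_sub_C _)

lemma natDegree_pairProd : (pairProd a b s).natDegree = 2 * s.card := by
  rw [pairProd, natDegree_prod_of_monic _ _ fun _ _ => (monic_X_sub_C _).mul (monic_X_sub_C _)]
  simp [natDegree_mul (X_sub_C_ne_zero _) (X_sub_C_ne_zero _), mul_comm]

lemma eval_pairProd (τ : ℝ) : (pairProd a b s).eval τ = ∏ i ∈ s, (τ - a i) * (τ - b i) := by
  simp [pairProd, eval_prod]

lemma eval_pairProd_nonneg {τ : ℝ} (hab : ∀ i ∈ s, a i ≤ b i)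
    (hτ : ∀ i ∈ s, τ ∉ Ioo (a i) (b i)) : 0 ≤ (pairProd a b s).eval τ := by
  rw [eval_pairProd]
  refine Finset.prod_nonneg fun i hi => ?_
  have := hab i hi
  rcases le_or_gt τ (a i) with h | h
  · nlinarith
  · nlinarith [not_lt.1 fun h' => hτ i hi ⟨h, h'⟩]

lemma eval_pairProd_nonpos {τ : ℝ} {k : ι} (hab : ∀ i ∈ s, a i ≤ b i) (hk : k ∈ s)
    (hτk : τ ∈ Icc (a k) (b k)) (hτ : ∀ i ∈ s, i ≠ k → τ ∉ Ioo (a i) (b i)) :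
    (pairProd a b s).eval τ ≤ 0 := by
  classical
  have hrest : 0 ≤ (pairProd a b (s.erase k)).eval τ :=
    eval_pairProd_nonneg (fun i hi => hab i (Finset.mem_of_mem_erase hi))
      fun i hi => hτ i (Finset.mem_of_mem_erase hi) (Finset.ne_of_mem_erase hi)
  rw [eval_pairProd] at hrest ⊢
  rw [← Finset.mul_prod_erase s _ hk]
  exact mul_nonpos_of_nonpos_of_nonneg
    (mul_nonpos_of_nonneg_of_nonpos (sub_nonneg.2 hτk.1) (sub_nonpos.2 hτk.2)) hrest

lemma pairProd_dvd [LinearOrder ι] {p : ℝ[X]} (hab : ∀ i ∈ s, a i < b i)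
    (hord : ∀ i ∈ s, ∀ j ∈ s, i < j → b i < a j)
    (ha : ∀ i ∈ s, p.eval (a i) = 0) (hb : ∀ i ∈ s, p.eval (b i) = 0) :
    pairProd a b s ∣ p := by
  refine Finset.prod_dvd_of_coprime (fun i hi j hj hij => ?_) fun i hi =>
    (isCoprime_X_sub_C_of_ne (hab i hi).ne).mul_dvd (dvd_iff_isRoot.2 (ha i hi))
      (dvd_iff_isRoot.2 (hb i hi))
  wlog hlt : i < j generalizing i j
  · exact (this j hj i hi hij.symm (lt_of_le_of_ne (not_lt.1 hlt) hij.symm)).symm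
  have := hab i hi
  have := hab j hj
  have := hord i hi j hj hlt
  exact ((isCoprime_X_sub_C_of_ne (by linarith)).mul_right
      (isCoprime_X_sub_C_of_ne (by linarith))).mul_left
    ((isCoprime_X_sub_C_of_ne (by linarith)).mul_right (isCoprime_X_sub_C_of_ne (by linarith)))

end pairProd

end Polynomial

section HermiteMajorant

variable {y ξ : ℕ → ℝ} {m k₀ : ℕ} {P : ℝ[X]}

/-- Gap `j` is the interval `(y j, y (j + 1))`. -/
def flatGaps (m k₀ : ℕ) : Finset ℕ := (Finset.range (m - 1)).filter (· + 1 ≠ k₀)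

lemma mem_flatGaps {j : ℕ} : j ∈ flatGaps m k₀ ↔ j + 1 < m ∧ j + 1 ≠ k₀ := by
  simp only [flatGaps, Finset.mem_filter, Finset.mem_range]
  omega

lemma card_flatGaps_zero : (flatGaps m 0).card = m - 1 := by
  rw [flatGaps, Finset.filter_true_of_mem fun j _ => j.succ_ne_zero, Finset.card_range]

lemma card_flatGaps_succ {k : ℕ} (hk : k + 1 < m) : (flatGaps m (k + 1)).card = m - 2 := by
  have : flatGaps m (k + 1) = (Finset.range (m - 1)).erase k := by
    ext j
    simp only [mem_flatGaps, Finset.mem_erase, Finset.mem_range]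
    omega
  rw [this, Finset.card_erase_of_mem (Finset.mem_range.2 (by omega)), Finset.card_range]
  omega

lemma exists_rolle_points (hy : StrictMono y)
    (hval : ∀ k < m, P.eval (y k) = if k₀ ≤ k then 1 else 0) :
    ∃ ξ : ℕ → ℝ, ∀ j ∈ flatGaps m k₀,
      ξ j ∈ Ioo (y j) (y (j + 1)) ∧ (derivative P).eval (ξ j) = 0 := by
  have h : ∀ j, ∃ c, j ∈ flatGaps m k₀ →
      c ∈ Ioo (y j) (y (j + 1)) ∧ (derivative P).eval c = 0 := by
    intro j
    by_cases hj : j ∈ flatGaps m k₀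
    · rw [mem_flatGaps] at hj
      have heq : P.eval (y j) = P.eval (y (j + 1)) := by
        rw [hval j (by omega), hval (j + 1) hj.1]
        split_ifs <;> first | rfl | omega
      obtain ⟨c, hc, hc₀⟩ := P.exists_mem_Ioo_derivative_eval_eq_zero (hy j.lt_succ_self) heq
      exact ⟨c, fun _ => ⟨hc, hc₀⟩⟩
    · exact ⟨0, fun h => absurd h hj⟩
  choose ξ hξ using h
  exact ⟨ξ, hξ⟩

lemma pairProd_dvd_derivative (hy : StrictMono y)
    (hder : ∀ k < m, k ≠ k₀ → (derivative P).eval (y k) = 0)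
    (hξ : ∀ j ∈ flatGaps m k₀, ξ j ∈ Ioo (y j) (y (j + 1)) ∧ (derivative P).eval (ξ j) = 0) :
    pairProd ξ (fun j => y (j + 1)) (flatGaps m k₀) ∣ derivative P := by
  refine pairProd_dvd (fun j hj => (hξ j hj).1.2) (fun i _ j hj hij => ?_)
    (fun j hj => (hξ j hj).2) fun j hj => ?_
  · exact (hy.monotone hij).trans_lt (hξ j hj).1.1
  · rw [mem_flatGaps] at hj
    exact hder (j + 1) hj.1 hj.2

lemma notMem_Ioo_of_mem_Icc_of_ne (hy : StrictMono y) {i j : ℕ} (hξj : y j < ξ j) (hij : j ≠ i)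
    {τ : ℝ} (hτ : τ ∈ Icc (y i) (y (i + 1))) : τ ∉ Ioo (ξ j) (y (j + 1)) := by
  rintro ⟨h₁, h₂⟩
  rcases hij.lt_or_gt with h | h
  · linarith [hτ.1, hy.monotone (show j + 1 ≤ i by omega)]
  · linarith [hτ.2, hy.monotone (show i + 1 ≤ j by omega)]

lemma derivative_eq_C_mul_pairProd (hy : StrictMono y) {k : ℕ} (hk : k + 1 < m)
    (hdeg : P.natDegree ≤ 2 * m - 2)
    (hder : ∀ j < m, j ≠ k + 1 → (derivative P).eval (y j) = 0)
    (hξ : ∀ j ∈ flatGaps m (k + 1),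
      ξ j ∈ Ioo (y j) (y (j + 1)) ∧ (derivative P).eval (ξ j) = 0) :
    derivative P = C (derivative P).leadingCoeff *
      ((X - C (y 0)) * pairProd ξ (fun j => y (j + 1)) (flatGaps m (k + 1))) := by
  refine eq_leadingCoeff_mul_of_monic_of_dvd_of_natDegree_le
    ((monic_X_sub_C _).mul monic_pairProd) ?_ ?_
  · refine IsCoprime.mul_dvd ?_ (dvd_iff_isRoot.2 (hder 0 (by omega) (by omega)))
      (pairProd_dvd_derivative hy hder hξ)
    refine IsCoprime.prod_right fun j hj => ?_
    exact (isCoprime_X_sub_C_of_ne ((hy.monotone j.zero_le).trans_lt (hξ j hj).1.1).ne).mul_right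
      (isCoprime_X_sub_C_of_ne (hy j.succ_pos).ne)
  · rw [natDegree_mul (X_sub_C_ne_zero _) monic_pairProd.ne_zero, natDegree_X_sub_C,
      natDegree_pairProd, card_flatGaps_succ hk]
    have := natDegree_derivative_le P
    omega

lemma exists_pos_derivative_eval_eq (hy : StrictMono y) {k : ℕ} (hk : k + 1 < m)
    (hdeg : P.natDegree ≤ 2 * m - 2)
    (hval : ∀ j < m, P.eval (y j) = if k + 1 ≤ j then 1 else 0)
    (hder : ∀ j < m, j ≠ k + 1 → (derivative P).eval (y j) = 0)
    (hξ : ∀ j ∈ flatGaps m (k + 1),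
      ξ j ∈ Ioo (y j) (y (j + 1)) ∧ (derivative P).eval (ξ j) = 0) :
    ∃ c > 0, ∀ τ, (derivative P).eval τ =
      c * ((τ - y 0) * (pairProd ξ (fun j => y (j + 1)) (flatGaps m (k + 1))).eval τ) := by
  have heval : ∀ τ, (derivative P).eval τ = (derivative P).leadingCoeff *
      ((τ - y 0) * (pairProd ξ (fun j => y (j + 1)) (flatGaps m (k + 1))).eval τ) := fun τ => by
    conv_lhs => rw [derivative_eq_C_mul_pairProd hy hk hdeg hder hξ]
    simp
  refine ⟨_, ?_, heval⟩
  -- `P` rises from `0` to `1` across the central gap, where the second factor is `≥ 0`.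
  obtain ⟨η, hη, hslope⟩ := exists_deriv_eq_slope (fun t => P.eval t) (hy k.lt_succ_self)
    P.continuousOn P.differentiable.differentiableOn
  rw [Polynomial.deriv, hval (k + 1) hk, hval k (by omega), if_pos le_rfl,
    if_neg (by omega)] at hslope
  have hpos : 0 < (derivative P).eval η := by
    rw [hslope]
    exact div_pos (by norm_num) (sub_pos.2 (hy k.lt_succ_self))
  have hfactor : 0 ≤ (η - y 0) * (pairProd ξ (fun j => y (j + 1)) (flatGaps m (k + 1))).eval η :=
    mul_nonneg (sub_nonneg.2 ((hy.monotone k.zero_le).trans hη.1.le))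
      (eval_pairProd_nonneg (fun j hj => (hξ j hj).1.2.le) fun j hj =>
        notMem_Ioo_of_mem_Icc_of_ne hy (hξ j hj).1.1 (by rw [mem_flatGaps] at hj; omega)
          (Ioo_subset_Icc_self hη))
  rw [heval] at hpos
  exact pos_of_mul_pos_left hpos hfactor

lemma sign_pattern_of_eq_mul_pairProd (hy : StrictMono y) {J : Finset ℕ}
    (hξ : ∀ j ∈ J, ξ j ∈ Ioo (y j) (y (j + 1))) {f : ℝ → ℝ} {c : ℝ} (hc : 0 < c)
    (hf : ∀ τ, f τ = c * ((τ - y 0) * (pairProd ξ (fun j => y (j + 1)) J).eval τ)) :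
    (∀ τ ≤ y 0, f τ ≤ 0) ∧
      (∀ τ, y 0 ≤ τ → (∀ j ∈ J, τ ∉ Ioo (ξ j) (y (j + 1))) → 0 ≤ f τ) ∧
      ∀ j ∈ J, ∀ τ ∈ Icc (ξ j) (y (j + 1)), f τ ≤ 0 := by
  have hab : ∀ j ∈ J, ξ j ≤ y (j + 1) := fun j hj => (hξ j hj).2.le
  have hy₀ : ∀ j, y 0 ≤ y j := fun j => hy.monotone j.zero_le
  refine ⟨fun τ hτ => ?_, fun τ h₀ hτ => ?_, fun j hj τ hτ => ?_⟩ <;> rw [hf]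
  · refine mul_nonpos_of_nonneg_of_nonpos hc.le (mul_nonpos_of_nonpos_of_nonneg
      (sub_nonpos.2 hτ) (eval_pairProd_nonneg hab fun j hj h => ?_))
    linarith [h.1, (hξ j hj).1, hy₀ j]
  · exact mul_nonneg hc.le (mul_nonneg (sub_nonneg.2 h₀) (eval_pairProd_nonneg hab hτ))
  · have hτ' : τ ∈ Icc (y j) (y (j + 1)) := ⟨(hξ j hj).1.le.trans hτ.1, hτ.2⟩
    exact mul_nonpos_of_nonneg_of_nonpos hc.le (mul_nonpos_of_nonneg_of_nonpos
      (sub_nonneg.2 ((hy₀ j).trans hτ'.1)) (eval_pairProd_nonpos hab hj hτ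
        fun i hi hij => notMem_Ioo_of_mem_Icc_of_ne hy (hξ i hi).1 hij hτ'))

lemma exists_node_le_eval (hy : StrictMono y) (hk₀ : k₀ < m) {J : Finset ℕ}
    (hJ : ∀ j ∈ J, j + 1 < m) (hξ : ∀ j ∈ J, y j < ξ j)
    (hleft : ∀ τ ≤ y 0, (derivative P).eval τ ≤ 0)
    (hrise : ∀ τ, y 0 ≤ τ → (∀ j ∈ J, τ ∉ Ioo (ξ j) (y (j + 1))) → 0 ≤ (derivative P).eval τ)
    (hfall : ∀ j ∈ J, ∀ τ ∈ Icc (ξ j) (y (j + 1)), (derivative P).eval τ ≤ 0) (t : ℝ) :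
    ∃ i < m, P.eval (y i) ≤ P.eval t ∧ (y k₀ ≤ t → k₀ ≤ i) := by
  have hy₀ : ∀ j, y 0 ≤ y j := fun j => hy.monotone j.zero_le
  rcases lt_or_ge t (y 0) with ht | ht
  · exact ⟨0, by omega, P.eval_le_eval_of_derivative_nonpos ht.le fun τ hτ => hleft τ hτ.2.le,
      fun h => absurd (h.trans_lt ht) (not_lt.2 (hy₀ _))⟩
  classical
  set i := Nat.findGreatest (fun i => y i ≤ t) (m - 1)
  have hit : y i ≤ t := Nat.findGreatest_spec (P := fun i => y i ≤ t) (Nat.zero_le _) ht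
  rcases (Nat.findGreatest_le (P := fun i => y i ≤ t) (m - 1)).lt_or_eq with him | him
  · have hti : t < y (i + 1) :=
      not_le.1 (Nat.findGreatest_is_greatest (Nat.lt_succ_self i) (by omega))
    have hidx : y k₀ ≤ t → k₀ ≤ i := fun h => by
      have := hy.lt_iff_lt.1 (h.trans_lt hti)
      omega
    by_cases hdown : i ∈ J ∧ ξ i ≤ t
    · refine ⟨i + 1, by omega, P.eval_le_eval_of_derivative_nonpos hti.le fun τ hτ =>
        hfall i hdown.1 τ ⟨hdown.2.trans hτ.1.le, hτ.2.le⟩, fun h => (hidx h).trans i.le_succ⟩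
    refine ⟨i, by omega, P.eval_le_eval_of_derivative_nonneg hit fun τ hτ =>
      hrise τ ((hy₀ i).trans hτ.1.le) fun j hj => ?_, hidx⟩
    by_cases hji : j = i
    · subst hji
      exact fun h => hdown ⟨hj, (h.1.trans hτ.2).le⟩
    · exact notMem_Ioo_of_mem_Icc_of_ne hy (hξ j hj) hji ⟨hτ.1.le, hτ.2.le.trans hti.le⟩
  · refine ⟨i, by omega, P.eval_le_eval_of_derivative_nonneg hit fun τ hτ =>
      hrise τ ((hy₀ i).trans hτ.1.le) fun j hj h => ?_, fun _ => by omega⟩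
    have := hy.monotone (show j + 1 ≤ i by have := hJ j hj; omega)
    linarith [h.2, hτ.1]

theorem indicator_le_eval_of_hermite_nat (hy : StrictMono y) (hk₀ : k₀ < m)
    (hdeg : P.natDegree ≤ 2 * m - 2)
    (hval : ∀ k < m, P.eval (y k) = if k₀ ≤ k then 1 else 0)
    (hder : ∀ k < m, k ≠ k₀ → (derivative P).eval (y k) = 0) (t : ℝ) :
    (Ici (y k₀)).indicator 1 t ≤ P.eval t := by
  obtain ⟨ξ, hξ⟩ := exists_rolle_points hy hval
  have hnode : ∀ i < m, (y k₀ ≤ t → k₀ ≤ i) → (Ici (y k₀)).indicator 1 t ≤ P.eval (y i) :=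
    fun i hi hidx => by
      rw [hval i hi, indicator_apply]
      split_ifs with h₁ h₂ <;> first | exact absurd (hidx h₁) h₂ | simp
  rcases k₀ with _ | k
  · have hconst : derivative P = 0 := derivative_eq_zero_of_dvd_of_natDegree_le
      (pairProd_dvd_derivative hy hder hξ) (by rw [natDegree_pairProd, card_flatGaps_zero]; omega)
    have hP : P = C (P.coeff 0) := eq_C_of_natDegree_eq_zero (derivative_eq_zero.1 hconst)
    refine (hnode 0 hk₀ fun _ => le_rfl).trans_eq ?_
    rw [hP, eval_C, eval_C]
  · obtain ⟨c, hc, hP'⟩ := exists_pos_derivative_eval_eq hy hk₀ hdeg hval hder hξ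
    obtain ⟨hleft, hrise, hfall⟩ :=
      sign_pattern_of_eq_mul_pairProd hy (fun j hj => (hξ j hj).1) hc hP'
    obtain ⟨i, hi, hle, hidx⟩ := exists_node_le_eval hy hk₀
      (fun j hj => (mem_flatGaps.1 hj).1) (fun j hj => (hξ j hj).1.1) hleft hrise hfall t
    exact (hnode i hi hidx).trans hle

end HermiteMajorant

lemma exists_strictMono_nat_extension {m : ℕ} {x : Fin m → ℝ} (hx : StrictMono x) :
    ∃ y : ℕ → ℝ, StrictMono y ∧ ∀ k : Fin m, y k = x k := by
  rcases m with _ | n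
  · exact ⟨fun k => k, Nat.strictMono_cast, fun k => k.elim0⟩
  refine ⟨fun k => x ⟨min k n, by omega⟩ + (k - n : ℕ), strictMono_nat_of_lt_succ fun k => ?_,
    fun k => ?_⟩
  · rcases lt_or_ge k n with h | h
    · have : x ⟨min k n, by omega⟩ < x ⟨min (k + 1) n, by omega⟩ :=
        hx (Fin.mk_lt_mk.2 (by omega))
      simp only [Nat.sub_eq_zero_of_le h.le, Nat.sub_eq_zero_of_le (show k + 1 ≤ n by omega)]
      simpa using this
    · have h₁ : min k n = n := min_eq_right h
      have h₂ : min (k + 1) n = n := min_eq_right (by omega)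
      simp only [h₁, h₂, show k + 1 - n = k - n + 1 by omega, Nat.cast_succ]
      linarith
  · simp [min_eq_left (Nat.lt_succ_iff.1 k.isLt), Nat.sub_eq_zero_of_le (Nat.lt_succ_iff.1 k.isLt)]

section HermiteFin

variable {m : ℕ} {x : Fin m → ℝ} {P Q R : ℝ[X]}

theorem indicator_le_eval_of_hermite (hx : StrictMono x) (k₀ : Fin m)
    (hdeg : P.natDegree ≤ 2 * m - 2) (hval : ∀ k, P.eval (x k) = if k₀ ≤ k then 1 else 0)
    (hder : ∀ k, k ≠ k₀ → (derivative P).eval (x k) = 0) (t : ℝ) :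
    (Ici (x k₀)).indicator 1 t ≤ P.eval t := by
  obtain ⟨y, hy, hyx⟩ := exists_strictMono_nat_extension hx
  rw [← hyx]
  refine indicator_le_eval_of_hermite_nat hy k₀.isLt hdeg (fun k hk => ?_) (fun k hk hne => ?_) t
  · rw [hyx ⟨k, hk⟩, hval]
    simp [Fin.le_def]
  · rw [hyx ⟨k, hk⟩]
    exact hder _ (Fin.ne_of_val_ne hne)

theorem eval_le_indicator_of_hermite (hx : StrictMono x) (k₀ : Fin m)
    (hdeg : Q.natDegree ≤ 2 * m - 2) (hval : ∀ k, Q.eval (x k) = if k₀ < k then 1 else 0)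
    (hder : ∀ k, k ≠ k₀ → (derivative Q).eval (x k) = 0) (t : ℝ) :
    Q.eval t ≤ (Ici (x k₀)).indicator 1 t := by
  -- `1 - Q(-t)` is the majorant for the reflected nodes `-x (rev k)` and pivot `rev k₀`.
  have hx' : StrictMono fun k => -x (Fin.rev k) := fun i j h => neg_lt_neg (hx (Fin.rev_lt_rev.2 h))
  have key := indicator_le_eval_of_hermite hx' k₀.rev (P := 1 - Q.comp (-X)) ?_ (fun k => ?_)
    (fun k hk => ?_) (-t)
  · simp only [Fin.rev_rev, indicator_apply, mem_Ici, neg_le_neg_iff, Pi.one_apply, eval_sub,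
      eval_one, eval_comp, eval_neg, eval_X, neg_neg] at key ⊢
    split_ifs at key ⊢ <;> linarith
  · refine (natDegree_sub_le _ _).trans (max_le (by simp) ?_)
    rwa [natDegree_comp, natDegree_neg, natDegree_X, mul_one]
  · simp only [eval_sub, eval_one, eval_comp, eval_neg, eval_X, neg_neg, hval]
    rcases lt_or_ge k k₀.rev with h | h
    · simp [Fin.lt_rev_iff.2 h, not_le.2 h]
    · simp [h, mt Fin.lt_rev_iff.1 (not_lt.2 h)]
  · have : derivative (1 - Q.comp (-X)) = (derivative Q).comp (-X) := by
      simp [derivative_comp]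
    rw [this, eval_comp]
    simpa using hder _ (by rwa [Ne, Fin.rev_eq_iff])

theorem abs_eval_sub_indicator_le_sq (hx : StrictMono x) (k₀ : Fin m)
    (hPdeg : P.natDegree ≤ 2 * m - 2) (hPval : ∀ k, P.eval (x k) = if k₀ ≤ k then 1 else 0)
    (hPder : ∀ k, k ≠ k₀ → (derivative P).eval (x k) = 0) (hRdeg : R.natDegree ≤ m - 1)
    (hRval : ∀ k, R.eval (x k) = if k = k₀ then 1 else 0) (t : ℝ) :
    |P.eval t - (Ici (x k₀)).indicator 1 t| ≤ R.eval t ^ 2 := by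
  have hlow := indicator_le_eval_of_hermite hx k₀ hPdeg hPval hPder t
  have hup := eval_le_indicator_of_hermite hx k₀ (Q := P - R ^ 2) ?_ (fun k => ?_)
    (fun k hk => ?_) t
  · rw [eval_sub, eval_pow] at hup
    rw [abs_le]
    constructor <;> linarith [sq_nonneg (R.eval t)]
  · refine (natDegree_sub_le _ _).trans (max_le hPdeg ?_)
    rw [natDegree_pow]
    omega
  · rw [eval_sub, eval_pow, hPval, hRval]
    rcases lt_trichotomy k₀ k with h | rfl | h
    · simp [h.le, h.ne', h]
    · simp
    · simp [not_le.2 h, h.ne, not_lt.2 h.le]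
  · simp [derivative_pow, hPder k hk, hRval, hk]

end HermiteFin

lemma Polynomial.integrable_eval {σ : Measure ℝ} (hmom : ∀ k : ℕ, Integrable (fun t => t ^ k) σ)
    (Q : ℝ[X]) : Integrable (fun t => Q.eval t) σ := by
  simp_rw [eval_eq_sum_range]
  exact integrable_finsetSum _ fun i _ => (hmom i).const_mul _

lemma integral_eval_sum_mul_of_orthonormal {σ : Measure ℝ}
    (hmom : ∀ k : ℕ, Integrable (fun t => t ^ k) σ) {S : ℕ → ℝ[X]}
    (horth : ∀ i j : ℕ, ∫ t, (S i).eval t * (S j).eval t ∂σ = if i = j then 1 else 0)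
    {s : Finset ℕ} (p : ℕ → ℝ) {n : ℕ} (hn : n ∈ s) :
    ∫ t, (∑ j ∈ s, C (p j) * S j).eval t * (S n).eval t ∂σ = p n := by
  simp only [eval_finsetSum, eval_mul, eval_C, Finset.sum_mul, mul_assoc]
  rw [integral_finsetSum _ fun j _ => ?_]
  · simp [integral_const_mul, horth, hn]
  · simpa using (integrable_eval hmom (S j * S n)).const_mul (p j)

lemma abs_integral_eval_mul_sub_setIntegral_le {σ : Measure ℝ}
    (hmom : ∀ k : ℕ, Integrable (fun t => t ^ k) σ) {P Q R : ℝ[X]} {A : Set ℝ}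
    (hA : MeasurableSet A) (hPR : ∀ t, |P.eval t - A.indicator 1 t| ≤ R.eval t ^ 2) :
    |∫ t, P.eval t * Q.eval t ∂σ - ∫ t in A, Q.eval t ∂σ|
      ≤ ∫ t, R.eval t ^ 2 * |Q.eval t| ∂σ := by
  have hind : (fun t => A.indicator 1 t * Q.eval t) = A.indicator fun t => Q.eval t := by
    ext t
    by_cases ht : t ∈ A <;> simp [ht]
  rw [← integral_indicator hA, ← hind, ← integral_sub (by simpa using integrable_eval hmom (P * Q))
    (hind ▸ (integrable_eval hmom Q).indicator hA), ← Real.norm_eq_abs]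
  refine norm_integral_le_of_norm_le ?_ (ae_of_all _ fun t => ?_)
  · refine (integrable_eval hmom (R ^ 2 * Q)).abs.congr (ae_of_all _ fun t => ?_)
    simp [abs_mul]
  · rw [Real.norm_eq_abs, ← sub_mul, abs_mul]
    exact mul_le_mul_of_nonneg_right (hPR t) (abs_nonneg _)

theorem cms_coeff_bound_general
    (σ : Measure ℝ)
    (hmom : ∀ k : ℕ, Integrable (fun t => t ^ k) σ)
    (S : ℕ → Polynomial ℝ)
    (horth : ∀ m n : ℕ, ∫ t, (S m).eval t * (S n).eval t ∂σ
        = if m = n then 1 else 0)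
    (n₀ : ℕ)
    (x : Fin n₀ → ℝ) (hx : StrictMono x)
    (k₀ : Fin n₀)
    (P R : Polynomial ℝ) (p : ℕ → ℝ)
    (hPdeg : P.degree ≤ (2 * n₀ - 2 : ℕ))
    (hPval : ∀ k, P.eval (x k) = if k₀ ≤ k then 1 else 0)
    (hPder : ∀ k, k ≠ k₀ → (Polynomial.derivative P).eval (x k) = 0)
    (hRdeg : R.degree ≤ (n₀ - 1 : ℕ))
    (hRval : ∀ k, R.eval (x k) = if k = k₀ then 1 else 0)
    (hPexp : P = ∑ n ∈ Finset.range (2 * n₀ - 1), Polynomial.C (p n) * S n)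
    (n : ℕ) (hn' : n ≤ 2 * n₀ - 2) :
    |p n| ≤ |∫ t in Set.Ici (x k₀), (S n).eval t ∂σ|
        + ∫ t, (R.eval t) ^ 2 * |(S n).eval t| ∂σ := by
  have hcoeff : ∫ t, P.eval t * (S n).eval t ∂σ = p n := by
    rw [hPexp]
    exact integral_eval_sum_mul_of_orthonormal hmom horth p
      (Finset.mem_range.2 (by have := k₀.pos; omega))
  have hsandwich := abs_eval_sub_indicator_le_sq hx k₀ (natDegree_le_iff_degree_le.2 hPdeg)
    hPval hPder (natDegree_le_iff_degree_le.2 hRdeg) hRval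
  have herror := abs_integral_eval_mul_sub_setIntegral_le hmom (Q := S n) measurableSet_Ici
    hsandwich
  rw [hcoeff] at herror
  linarith [abs_sub_abs_le_abs_sub (p n) (∫ t in Ici (x k₀), (S n).eval t ∂σ)]

/-- With `P = ∑ pₙ Sₙ` the Chebyshev–Markov–Stieltjes majorant of `𝟙_{[x k₀,∞)}`
at the zero `x k₀` of the orthonormal polynomial `S n₀`, and
`R` the Lagrange polynomial with `R(x k) = δ_{k k₀}` (so that
`0 ≤ P - 𝟙_{[x k₀,∞)} ≤ R²` pointwise), for each `1 ≤ n ≤ 2n₀-2` one has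
`|pₙ| ≤ |∫_{[x k₀,∞)} Sₙ dσ| + ∫ R² |Sₙ| dσ`. -/
theorem cms_coeff_bound
    (σ : Measure ℝ) [IsProbabilityMeasure σ]
    (hmom : ∀ k : ℕ, Integrable (fun t => t ^ k) σ)
    (S : ℕ → Polynomial ℝ)
    (hdeg : ∀ n, (S n).degree = n)
    (horth : ∀ m n : ℕ, ∫ t, (S m).eval t * (S n).eval t ∂σ
        = if m = n then 1 else 0)
    (n₀ : ℕ) (hn₀ : 1 ≤ n₀)
    (x : Fin n₀ → ℝ) (hx : StrictMono x)
    (hroot : ∀ k, (S n₀).eval (x k) = 0)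
    (k₀ : Fin n₀)
    (P R : Polynomial ℝ) (p : ℕ → ℝ)
    (hPdeg : P.degree ≤ (2 * n₀ - 2 : ℕ))
    (hPval : ∀ k, P.eval (x k) = if k₀ ≤ k then 1 else 0)
    (hPder : ∀ k, k ≠ k₀ → (Polynomial.derivative P).eval (x k) = 0)
    (hRdeg : R.degree ≤ (n₀ - 1 : ℕ))
    (hRval : ∀ k, R.eval (x k) = if k = k₀ then 1 else 0)
    (hPexp : P = ∑ n ∈ Finset.range (2 * n₀ - 1), Polynomial.C (p n) * S n)
    (n : ℕ) (hn : 1 ≤ n) (hn' : n ≤ 2 * n₀ - 2) :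
    |p n| ≤ |∫ t in Set.Ici (x k₀), (S n).eval t ∂σ|
        + ∫ t, (R.eval t) ^ 2 * |(S n).eval t| ∂σ :=
  cms_coeff_bound_general σ hmom S horth n₀ x hx k₀ P R p hPdeg hPval hPder hRdeg hRval hPexp n hn'
end

section
/- There is a universal constant C such that for every n₀ ≥ 1 and every zero x₀ = cos θ₀ of T_{n₀} with 0 < θ₀ ≤ π/2, one has ∫_ℝ [T_{n₀}(x)/(T_{n₀}'(x₀)(x - x₀))]² dσ₁(x) ≤ C/n₀. -/
/-!
Substituting `x = cos θ` turns `σ₁` into `dθ / π` on `[0, π]` and `T n₀ x` into `cos (n₀ θ)`.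
At a zero `x₀ = cos θ₀` one has `T n₀'(x₀) sin θ₀ = ± n₀`, and on `[0, π]`
`|cos θ - cos θ₀| ≥ sin θ₀ |θ - θ₀| / π`, while `|cos (n₀ θ)| ≤ min 1 (n₀ |θ - θ₀|)`.
Hence the squared Lagrange polynomial at `cos θ` is at most the Cauchy kernel
`2π² / (1 + n₀² (θ - θ₀)²)`, whose integral over `ℝ` is `2π³ / n₀`; so `∫ R² dσ₁ ≤ 2π² / n₀`.
-/

open MeasureTheory Polynomial Real

/-- The arcsine probability measure `dσ₁(x) = (1/π)(1-x²)₊^{-1/2} dx` on `[-1,1]`. -/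
noncomputable def arcsineMeasure : Measure ℝ :=
  volume.withDensity (fun x =>
    ENNReal.ofReal (Set.indicator (Set.Ioo (-1 : ℝ) 1)
      (fun x => (π * Real.sqrt (1 - x ^ 2))⁻¹) x))

open Set

theorem arcsineMeasure_eq_smul_measureT :
    arcsineMeasure = ENNReal.ofReal π⁻¹ • Chebyshev.measureT := by
  rw [arcsineMeasure, Chebyshev.measureT, restrict_withDensity measurableSet_Ioc,
    ← withDensity_indicator measurableSet_Ioc, ← withDensity_smul' _ _ ENNReal.ofReal_ne_top]
  congr 1
  funext x
  rw [Pi.smul_apply, smul_eq_mul]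
  by_cases hx : x ∈ Ioo (-1 : ℝ) 1
  · rw [indicator_of_mem hx, indicator_of_mem (Ioo_subset_Ioc_self hx), mul_inv,
      ENNReal.ofReal_mul (by positivity), ← Real.sqrt_inv]
    exact congrArg _ (ENNReal.ofReal_eq_coe_nnreal _)
  · rw [indicator_of_notMem hx]
    -- at `x = 1` the density of `measureT` is the junk value `√(0⁻¹) = 0`
    by_cases hx1 : x = 1
    · simp [hx1]
    · rw [indicator_of_notMem fun h : x ∈ Ioc (-1) 1 => hx ⟨h.1, lt_of_le_of_ne h.2 hx1⟩]
      simp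

theorem integral_arcsineMeasure_eq_integral_cos (f : ℝ → ℝ) :
    ∫ x, f x ∂arcsineMeasure = π⁻¹ * ∫ θ in 0..π, f (cos θ) := by
  rw [arcsineMeasure_eq_smul_measureT, integral_smul_measure,
    Chebyshev.integral_measureT_eq_integral_cos, ENNReal.toReal_ofReal (by positivity),
    smul_eq_mul]

theorem Polynomial.Chebyshev.eval_derivative_T_real_cos_mul_sin (n : ℤ) (θ : ℝ) :
    (derivative (T ℝ n)).eval (cos θ) * sin θ = n * sin (n * θ) := by
  rw [Chebyshev.T_derivative_eq_U, eval_mul, eval_intCast, mul_assoc, Chebyshev.U_real_cos]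
  push_cast
  ring_nf

theorem Real.abs_div_pi_le_abs_sin_half {x : ℝ} (hx : |x| ≤ π) : |x| / π ≤ |sin (x / 2)| := by
  have hle : |x / 2| ≤ π / 2 := by rw [abs_div, abs_two]; linarith
  rw [abs_sin_eq_sin_abs_of_abs_le_pi (by linarith [pi_pos])]
  calc |x| / π = 2 / π * |x / 2| := by rw [abs_div, abs_two]; field_simp
    _ ≤ sin |x / 2| := mul_le_sin (abs_nonneg _) hle

theorem Real.sin_div_two_le_sin_add_div_two {θ₀ θ : ℝ} (h₀ : θ₀ ∈ Icc 0 π) (h : θ ∈ Icc 0 π) :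
    sin θ₀ / 2 ≤ sin ((θ + θ₀) / 2) := by
  obtain ⟨h₀0, h₀π⟩ := h₀
  obtain ⟨h0, hπ⟩ := h
  -- by concavity, `sin` on `[θ₀/2, θ₀/2 + π/2]` is at least `min (sin (θ₀/2)) (cos (θ₀/2))`
  have hmin := strictConcaveOn_sin_Icc.concaveOn.min_le_of_mem_Icc
    (x := θ₀ / 2) (y := θ₀ / 2 + π / 2) (z := (θ + θ₀) / 2)
    ⟨by linarith, by linarith⟩ ⟨by linarith, by linarith⟩ ⟨by linarith, by linarith⟩
  rw [sin_add_pi_div_two] at hmin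
  have hdouble : sin θ₀ / 2 = sin (θ₀ / 2) * cos (θ₀ / 2) := by
    have := sin_two_mul (θ₀ / 2)
    rw [mul_div_cancel₀ _ two_ne_zero] at this
    linarith
  refine le_trans ?_ hmin
  rw [hdouble, le_min_iff]
  exact ⟨mul_le_of_le_one_right (sin_nonneg_of_nonneg_of_le_pi (by linarith) (by linarith))
      (cos_le_one _),
    mul_le_of_le_one_left (cos_nonneg_of_mem_Icc ⟨by linarith, by linarith⟩) (sin_le_one _)⟩

theorem Real.sin_mul_abs_sub_le_pi_mul_abs_cos_sub_cos {θ₀ θ : ℝ} (h₀ : θ₀ ∈ Icc 0 π)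
    (h : θ ∈ Icc 0 π) : sin θ₀ * |θ - θ₀| ≤ π * |cos θ - cos θ₀| := by
  have hsin₀ : 0 ≤ sin θ₀ / 2 := div_nonneg (sin_nonneg_of_nonneg_of_le_pi h₀.1 h₀.2) two_pos.le
  have hsum := sin_div_two_le_sin_add_div_two h₀ h
  have hdiff := abs_div_pi_le_abs_sin_half (x := θ - θ₀)
    (abs_sub_le_iff.mpr ⟨by linarith [h.2, h₀.1], by linarith [h.1, h₀.2]⟩)
  rw [cos_sub_cos, abs_mul, abs_mul, abs_neg, abs_two, abs_of_nonneg (hsin₀.trans hsum)]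
  calc sin θ₀ * |θ - θ₀| = π * (2 * (sin θ₀ / 2 * (|θ - θ₀| / π))) := by field_simp
    _ ≤ π * (2 * (sin ((θ + θ₀) / 2) * |sin ((θ - θ₀) / 2)|)) := by
        gcongr ?_ * (?_ * ?_)
        exact mul_le_mul hsum hdiff (by positivity) (hsin₀.trans hsum)
    _ = π * (2 * sin ((θ + θ₀) / 2) * |sin ((θ - θ₀) / 2)|) := by ring

theorem div_le_two_mul_div_one_add {a t D K : ℝ} (ha₀ : 0 ≤ a) (ha₁ : a ≤ 1) (hat : a ≤ t)
    (htD : t ≤ K * D) (hK : 0 ≤ K) : a / D ≤ 2 * K / (1 + t) := by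
  have ht : 0 ≤ t := ha₀.trans hat
  rcases le_or_gt D 0 with hD | hD
  · exact (div_nonpos_of_nonneg_of_nonpos ha₀ hD).trans (by positivity)
  · rw [div_le_div_iff₀ hD (by positivity)]
    nlinarith

theorem Polynomial.Chebyshev.sq_lagrange_T_real_cos_le {n : ℤ} {θ₀ θ : ℝ}
    (h₀ : θ₀ ∈ Icc 0 π) (h : θ ∈ Icc 0 π) (hzero : cos (n * θ₀) = 0) :
    ((Chebyshev.T ℝ n).eval (cos θ)
        / ((derivative (Chebyshev.T ℝ n)).eval (cos θ₀) * (cos θ - cos θ₀))) ^ 2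
      ≤ 2 * π ^ 2 / (1 + (n * (θ - θ₀)) ^ 2) := by
  set d := (derivative (Chebyshev.T ℝ n)).eval (cos θ₀)
  have hsin : sin (n * θ₀) ^ 2 = 1 := by nlinarith [sin_sq_add_cos_sq (n * θ₀)]
  have hd : (d * sin θ₀) ^ 2 = n ^ 2 := by
    rw [Chebyshev.eval_derivative_T_real_cos_mul_sin, mul_pow, hsin, mul_one]
  have hnum : cos (n * θ) ^ 2 ≤ (n * (θ - θ₀)) ^ 2 := by
    have := abs_cos_sub_cos_le (n * θ) (n * θ₀)
    rw [hzero, sub_zero, ← mul_sub] at this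
    exact sq_le_sq.mpr this
  have hden : (n * (θ - θ₀)) ^ 2 ≤ π ^ 2 * (d * (cos θ - cos θ₀)) ^ 2 := by
    have := mul_le_mul_of_nonneg_left (sin_mul_abs_sub_le_pi_mul_abs_cos_sub_cos h₀ h)
      (abs_nonneg d)
    calc (n * (θ - θ₀)) ^ 2 = (|d| * (sin θ₀ * |θ - θ₀|)) ^ 2 := by
          rw [mul_pow, ← hd, mul_pow, mul_pow, mul_pow, sq_abs, sq_abs]; ring
      _ ≤ (|d| * (π * |cos θ - cos θ₀|)) ^ 2 :=
          pow_le_pow_left₀ (mul_nonneg (abs_nonneg d)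
            (mul_nonneg (sin_nonneg_of_nonneg_of_le_pi h₀.1 h₀.2) (abs_nonneg _))) this 2
      _ = π ^ 2 * (d * (cos θ - cos θ₀)) ^ 2 := by
          simp only [mul_pow, sq_abs]; ring
  rw [Chebyshev.T_real_cos, div_pow]
  exact div_le_two_mul_div_one_add (sq_nonneg _) (cos_sq_le_one _) hnum hden (sq_nonneg π)

theorem integrable_inv_one_add_sq_mul_sub {a : ℝ} (ha : a ≠ 0) (x₀ : ℝ) :
    Integrable fun x : ℝ => (1 + (a * (x - x₀)) ^ 2)⁻¹ :=
  (integrable_inv_one_add_sq.comp_mul_left' ha).comp_sub_right x₀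

theorem integral_inv_one_add_sq_mul_sub {a : ℝ} (ha : 0 < a) (x₀ : ℝ) :
    ∫ x : ℝ, (1 + (a * (x - x₀)) ^ 2)⁻¹ = π / a := by
  rw [integral_sub_right_eq_self (fun x => (1 + (a * x) ^ 2)⁻¹),
    Measure.integral_comp_mul_left (fun x => (1 + x ^ 2)⁻¹), integral_univ_inv_one_add_sq,
    abs_of_pos (inv_pos.mpr ha), smul_eq_mul, inv_mul_eq_div]

/-- There is a universal constant `C` such that for every `n₀ ≥ 1` and every zero
`x₀ = cos θ₀` of `T n₀` with `0 < θ₀ ≤ π/2`, the Lagrange polynomial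
`R(x) = T n₀(x)/(T n₀'(x₀)(x - x₀))` satisfies `∫ R² dσ₁ ≤ C/n₀`. -/
theorem arcsine_lagrange_sq_integral_bound :
    ∃ C : ℝ, 0 < C ∧
      ∀ n₀ : ℕ, 1 ≤ n₀ → ∀ θ₀ : ℝ, 0 < θ₀ → θ₀ ≤ π / 2 →
        (Polynomial.Chebyshev.T ℝ n₀).eval (Real.cos θ₀) = 0 →
        ∫ x, ((Polynomial.Chebyshev.T ℝ n₀).eval x
            / ((Polynomial.derivative (Polynomial.Chebyshev.T ℝ n₀)).eval (Real.cos θ₀)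
                * (x - Real.cos θ₀))) ^ 2 ∂arcsineMeasure
          ≤ C / n₀ := by
  refine ⟨2 * π ^ 2, by positivity, fun n hn θ₀ hθ₀pos hθ₀le heval => ?_⟩
  have hn : (0 : ℝ) < n := by exact_mod_cast hn
  have hθ₀ : θ₀ ∈ Icc 0 π := ⟨hθ₀pos.le, by linarith [pi_pos]⟩
  have hzero : cos (((n : ℤ) : ℝ) * θ₀) = 0 := by rwa [← Chebyshev.T_real_cos]
  set kernel := fun θ : ℝ => 2 * π ^ 2 * (1 + (n * (θ - θ₀)) ^ 2)⁻¹
  rw [integral_arcsineMeasure_eq_integral_cos, intervalIntegral.integral_of_le pi_pos.le,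
    ← integral_indicator measurableSet_Ioc]
  calc π⁻¹ * ∫ θ, (Ioc 0 π).indicator _ θ ≤ π⁻¹ * ∫ θ, kernel θ := by
        refine mul_le_mul_of_nonneg_left ?_ (inv_nonneg.mpr pi_pos.le)
        refine integral_mono_of_nonneg (ae_of_all _ fun θ => ?_)
          ((integrable_inv_one_add_sq_mul_sub hn.ne' θ₀).const_mul _)
          (ae_of_all _ (indicator_le' (fun θ hθ => ?_) fun θ _ => by positivity))
        · exact indicator_nonneg (fun _ _ => sq_nonneg _) θ
        · simpa [kernel, div_eq_mul_inv] using
            Chebyshev.sq_lagrange_T_real_cos_le hθ₀ (Ioc_subset_Icc_self hθ) hzero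
    _ = 2 * π ^ 2 / n := by
        rw [integral_const_mul, integral_inv_one_add_sq_mul_sub hn]
        field_simp
end

section
/- For |θ - θ₀| ≤ π/(3n₀), where cos θ₀ is a zero of T_{n₀} with 0 < θ₀ ≤ π/2 and 0 ≤ θ ≤ π, one has |T_{n₀}'(cos θ)| ≥ |T_{n₀}'(cos θ₀)|/C for a universal constant C, i.e., n₀·|sin(n₀θ)|/sin θ ≥ (n₀/sin θ₀)/C. -/
/-!
Writing `x = cos θ`, one has `T_n'(cos θ) · sin θ = n sin (nθ)`. At a zero `cos θ₀` of `T_n`,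
`nθ₀` is an odd multiple of `π/2`, so `|sin (nθ₀)| = 1`, and since `|nθ - nθ₀| ≤ π/3`,
`|sin (nθ)| ≥ cos (π/3) = 1/2`. Moreover `nθ₀ ≥ π/2` forces `θ ≤ 5θ₀/3`, and then
`sin θ ≤ θ ≤ 5θ₀/3 ≤ (5π/6) sin θ₀ ≤ 3 sin θ₀` by Jordan's inequality. Together these give the
bound with `C = 6`.
-/

open Polynomial Real

namespace Real

lemma abs_sin_eq_one_of_cos_eq_zero {x : ℝ} (hx : cos x = 0) : |sin x| = 1 := by
  have h := sin_sq_add_cos_sq x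
  rw [hx] at h
  rw [← abs_one, ← sq_eq_sq_iff_abs_eq_abs]
  linarith

lemma pi_div_two_le_of_cos_eq_zero {x : ℝ} (hx : cos x = 0) (h₀ : 0 ≤ x) : π / 2 ≤ x := by
  by_contra! hlt
  have : 0 < cos x := cos_pos_of_mem_Ioo ⟨by linarith [pi_pos], hlt⟩
  exact this.ne' hx

lemma half_le_abs_sin_of_cos_eq_zero {x y : ℝ} (hx : cos x = 0) (hxy : |y - x| ≤ π / 3) :
    1 / 2 ≤ |sin y| := by
  have hcos : 1 / 2 ≤ cos (y - x) := by
    rw [← cos_abs, ← cos_pi_div_three]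
    exact cos_le_cos_of_nonneg_of_le_pi (abs_nonneg _) (by linarith [pi_pos]) hxy
  have hsin : sin y = sin x * cos (y - x) := by
    rw [show y = x + (y - x) by ring, sin_add, hx]
    ring_nf
  rw [hsin, abs_mul, abs_sin_eq_one_of_cos_eq_zero hx, one_mul]
  exact hcos.trans (le_abs_self _)

lemma sin_le_three_mul_sin_of_le {θ θ₀ : ℝ} (hθ : 0 ≤ θ) (hθ₀ : θ₀ ≤ π / 2)
    (h : θ ≤ 5 / 3 * θ₀) : sin θ ≤ 3 * sin θ₀ := by
  have hjordan : 2 / π * θ₀ ≤ sin θ₀ := mul_le_sin (by linarith) hθ₀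
  have hjordan' : θ₀ ≤ π / 2 * sin θ₀ := by
    rw [div_mul_eq_mul_div, div_le_iff₀ pi_pos] at hjordan
    linarith
  have hsin₀ : 0 ≤ sin θ₀ := sin_nonneg_of_nonneg_of_le_pi (by linarith) (by linarith)
  nlinarith [sin_le hθ, pi_lt_d2]

end Real

namespace Polynomial.Chebyshev

lemma T_derivative_eval_cos_mul_sin (n : ℤ) (θ : ℝ) :
    (derivative (T ℝ n)).eval (cos θ) * sin θ = n * sin (n * θ) := by
  have hU := U_real_cos θ (n - 1)
  rw [show ((n - 1 : ℤ) : ℝ) + 1 = n by push_cast; ring] at hU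
  rw [T_derivative_eq_U, eval_mul, eval_intCast, mul_assoc, hU]

lemma abs_T_derivative_eval_cos_mul_sin (n : ℕ) {θ : ℝ} (hθ : 0 ≤ sin θ) :
    |(derivative (T ℝ n)).eval (cos θ)| * sin θ = n * |sin (n * θ)| := by
  have h := congrArg abs (T_derivative_eval_cos_mul_sin n θ)
  rwa [abs_mul, abs_mul, abs_of_nonneg hθ, Int.cast_natCast, Nat.abs_cast] at h

end Polynomial.Chebyshev

open Polynomial.Chebyshev in
/-- Near a zero `cos θ₀` of `T n₀` (with `0 < θ₀ ≤ π/2`), the derivative of `T n₀`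
stays comparable to its value at the zero: there is a universal constant `C > 0`
such that for `0 ≤ θ ≤ π` with `|θ - θ₀| ≤ π/(3n₀)`,
`|T n₀'(cos θ)| ≥ |T n₀'(cos θ₀)|/C`. -/
theorem chebyshev_T_deriv_lower_bound_near_zero :
    ∃ C : ℝ, 0 < C ∧
      ∀ n₀ : ℕ, 1 ≤ n₀ → ∀ θ₀ θ : ℝ,
        0 < θ₀ → θ₀ ≤ π / 2 →
        (Polynomial.Chebyshev.T ℝ n₀).eval (Real.cos θ₀) = 0 →
        0 ≤ θ → θ ≤ π → |θ - θ₀| ≤ π / (3 * n₀) →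
        |(Polynomial.derivative (Polynomial.Chebyshev.T ℝ n₀)).eval (Real.cos θ₀)| / C
          ≤ |(Polynomial.derivative (Polynomial.Chebyshev.T ℝ n₀)).eval (Real.cos θ)| := by
  refine ⟨6, by norm_num, fun n hn θ₀ θ hθ₀ hθ₀_le hzero hθ hθ_le hnear => ?_⟩
  have hn : (0 : ℝ) < n := by exact_mod_cast hn
  have hcos : cos (n * θ₀) = 0 := by
    simpa only [T_real_cos, Int.cast_natCast] using hzero
  have hnθ₀ : π / 2 ≤ n * θ₀ := pi_div_two_le_of_cos_eq_zero hcos (by positivity)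
  have hnear' : |n * θ - n * θ₀| ≤ π / 3 := by
    rw [← mul_sub, abs_mul, abs_of_pos hn]
    calc n * |θ - θ₀| ≤ n * (π / (3 * n)) := by gcongr
      _ = π / 3 := by field_simp
  have hnθ := abs_le.mp hnear'
  have hθ_pos : 0 < θ := pos_of_mul_pos_right (by linarith [pi_pos]) hn.le
  have hθ_le' : θ ≤ 5 / 3 * θ₀ := le_of_mul_le_mul_left (by nlinarith) hn
  have hsin : sin θ ≤ 3 * sin θ₀ := sin_le_three_mul_sin_of_le hθ hθ₀_le hθ_le'
  have hsin_pos : 0 < sin θ := sin_pos_of_pos_of_lt_pi hθ_pos (by linarith [pi_pos])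
  have hsin₀_pos : 0 < sin θ₀ := sin_pos_of_pos_of_lt_pi hθ₀ (by linarith [pi_pos])
  have hD₀ := abs_T_derivative_eval_cos_mul_sin n hsin₀_pos.le
  have hD := abs_T_derivative_eval_cos_mul_sin n hsin_pos.le
  rw [abs_sin_eq_one_of_cos_eq_zero hcos, mul_one] at hD₀
  have hhalf := half_le_abs_sin_of_cos_eq_zero hcos hnear'
  rw [div_le_iff₀ (by norm_num)]
  refine le_of_mul_le_mul_right ?_ hsin_pos
  calc |(derivative (T ℝ n)).eval (cos θ₀)| * sin θ
      ≤ |(derivative (T ℝ n)).eval (cos θ₀)| * (3 * sin θ₀) := by gcongr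
    _ = 3 * n := by rw [← hD₀]; ring
    _ ≤ 6 * (n * |sin (n * θ)|) := by nlinarith
    _ = |(derivative (T ℝ n)).eval (cos θ)| * 6 * sin θ := by rw [← hD]; ring
end
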